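/- arXiv:1410.8174 — 5 statements merged into one kernel-verified Lean document; each statement's English description precedes it below -/
import Mathlib

section
/- Let H be a complex Hilbert space and A : ℝ → B(H) strongly continuous. Then for any t₀ ∈ ℝ and V₀ ∈ B(H), the initial value problem V'(t) = A(t)V(t), V(t₀) = V₀, has a unique strong solution V : ℝ → B(H), meaning: for every ψ ∈ H the map t ↦ V(t)ψ is differentiable with derivative A(t)V(t)ψ, and V(t₀)ψ = V₀ψ. -/
/-!
On a compact interval `[a, b] ∋ t₀` the uniform boundedness principle bounds `‖A s‖` by some `L`.
The Picard map `V ↦ V₀ + ∫_{t₀}^t A(s) V(s) ds` (strong integrals) on `C([a, b], B(H))` has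
`k`-th iterate Lipschitz with constant `(L (b - a))^k / k!`, so some iterate is a contraction and
its fixed point solves the problem on `(a, b)`. Uniqueness is Gronwall uniqueness for the vector
equation `u' = A(t) u`, applied to each `t ↦ V(t) ψ`; it also makes the local solutions on growing
intervals agree, so that they glue to a global one.
-/

open Set Filter Topology Function intervalIntegral
open scoped Interval

section

variable {𝕜 : Type*} [NontriviallyNormedField 𝕜]
  {E : Type*} [NormedAddCommGroup E] [NormedSpace 𝕜 E] [CompleteSpace E]

section StronglyContinuous

variable {F : Type*} [NormedAddCommGroup F] [NormedSpace 𝕜 F]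
  {X : Type*} [TopologicalSpace X] {B : X → E →L[𝕜] F}

theorem IsCompact.exists_bound_of_continuous_apply (hB : ∀ x, Continuous (B · x)) {K : Set X}
    (hK : IsCompact K) : ∃ C, 0 ≤ C ∧ ∀ s ∈ K, ‖B s‖ ≤ C := by
  obtain ⟨C, hC⟩ := banach_steinhaus (g := fun s : K => B s) fun x => by
    obtain ⟨C, hC⟩ := hK.exists_bound_of_continuousOn (hB x).continuousOn
    exact ⟨C, fun s => hC s s.2⟩
  exact ⟨max C 0, le_max_right _ _, fun s hs => (hC ⟨s, hs⟩).trans (le_max_left _ _)⟩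

theorem Continuous.clm_apply_of_continuous_apply [LocallyCompactSpace X]
    (hB : ∀ x, Continuous (B · x)) {f : X → E} (hf : Continuous f) :
    Continuous fun s => B s (f s) := by
  refine continuous_iff_continuousAt.2 fun s₀ => ?_
  obtain ⟨K, hK, hKs₀⟩ := exists_compact_mem_nhds s₀
  obtain ⟨C, -, hC⟩ := hK.exists_bound_of_continuous_apply hB
  rw [ContinuousAt, tendsto_iff_norm_sub_tendsto_zero]
  have hlim :
      Tendsto (fun s => C * ‖f s - f s₀‖ + ‖B s (f s₀) - B s₀ (f s₀)‖) (𝓝 s₀) (𝓝 0) := by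
    have h₁ := (tendsto_iff_norm_sub_tendsto_zero.1 (hf.tendsto s₀)).const_mul C
    have h₂ := tendsto_iff_norm_sub_tendsto_zero.1 ((hB (f s₀)).tendsto s₀)
    simpa using h₁.add h₂
  refine squeeze_zero' (Eventually.of_forall fun _ => norm_nonneg _) ?_ hlim
  filter_upwards [hKs₀] with s hs
  calc ‖B s (f s) - B s₀ (f s₀)‖ = ‖B s (f s - f s₀) + (B s (f s₀) - B s₀ (f s₀))‖ := by
        rw [map_sub, sub_add_sub_cancel]
    _ ≤ C * ‖f s - f s₀‖ + ‖B s (f s₀) - B s₀ (f s₀)‖ :=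
        (norm_add_le _ _).trans (add_le_add_left ((B s).le_of_opNorm_le (hC s hs) _) _)

end StronglyContinuous

section StrongIntegral

variable {F : Type*} [NormedAddCommGroup F] [NormedSpace 𝕜 F] [NormedSpace ℝ F]
  [SMulCommClass ℝ 𝕜 F] {B : ℝ → E →L[𝕜] F}

/-- The strong integral `∫_a^b B(s) ds`: a strongly continuous `B` need not be Bochner integrable
in operator norm, but `x ↦ ∫_a^b B(s) x ds` is bounded by the uniform boundedness principle. -/
noncomputable def intervalIntegralCLM (B : ℝ → E →L[𝕜] F) (hB : ∀ x, Continuous (B · x))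
    (a b : ℝ) : E →L[𝕜] F :=
  LinearMap.mkContinuousOfExistsBound
    { toFun := fun x => ∫ s in a..b, B s x
      map_add' := fun x y => by
        simp only [map_add]
        exact integral_add ((hB x).intervalIntegrable a b) ((hB y).intervalIntegrable a b)
      map_smul' := fun c x => by
        simp only [map_smul, RingHom.id_apply]
        exact integral_smul c _ }
    (by
      obtain ⟨C, -, hC⟩ :=
        (isCompact_uIcc (a := a) (b := b)).exists_bound_of_continuous_apply hB
      refine ⟨C * |b - a|, fun x => ?_⟩
      rw [mul_right_comm]
      exact norm_integral_le_of_norm_le_const fun s hs =>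
        (B s).le_of_opNorm_le (hC s (uIoc_subset_uIcc hs)) x)

variable (hB : ∀ x, Continuous (B · x))

@[simp]
theorem intervalIntegralCLM_apply (a b : ℝ) (x : E) :
    intervalIntegralCLM B hB a b x = ∫ s in a..b, B s x :=
  rfl

theorem intervalIntegralCLM_sub_intervalIntegralCLM (a b c : ℝ) :
    intervalIntegralCLM B hB a b - intervalIntegralCLM B hB a c =
      intervalIntegralCLM B hB c b := by
  ext x
  exact integral_interval_sub_left ((hB x).intervalIntegrable a b) ((hB x).intervalIntegrable a c)

theorem norm_intervalIntegralCLM_le {a b C : ℝ} (hC₀ : 0 ≤ C) (hC : ∀ s ∈ Ι a b, ‖B s‖ ≤ C) :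
    ‖intervalIntegralCLM B hB a b‖ ≤ C * |b - a| :=
  ContinuousLinearMap.opNorm_le_bound _ (by positivity) fun x => by
    rw [intervalIntegralCLM_apply, mul_right_comm]
    exact norm_integral_le_of_norm_le_const fun s hs => (B s).le_of_opNorm_le (hC s hs) x

theorem continuous_intervalIntegralCLM_right (a : ℝ) :
    Continuous fun b => intervalIntegralCLM B hB a b := by
  refine continuous_iff_continuousAt.2 fun b₀ => ?_
  obtain ⟨C, hC₀, hC⟩ :=
    (isCompact_Icc (a := b₀ - 1) (b := b₀ + 1)).exists_bound_of_continuous_apply hB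
  rw [ContinuousAt, tendsto_iff_norm_sub_tendsto_zero]
  have hlim : Tendsto (fun b => C * |b - b₀|) (𝓝 b₀) (𝓝 0) := by
    simpa using ((continuous_id.sub continuous_const).abs.const_mul C).tendsto' b₀ _ (by simp)
  refine squeeze_zero' (Eventually.of_forall fun _ => norm_nonneg _) ?_ hlim
  filter_upwards [Icc_mem_nhds (sub_one_lt b₀) (lt_add_one b₀)] with b hb
  rw [intervalIntegralCLM_sub_intervalIntegralCLM]
  exact norm_intervalIntegralCLM_le hB hC₀ fun s hs =>
    hC s (uIcc_subset_Icc ⟨by linarith, by linarith⟩ hb (uIoc_subset_uIcc hs))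

end StrongIntegral

section Picard

variable {A : ℝ → E →L[𝕜] E} (hA : ∀ x, Continuous (A · x)) {a b : ℝ} (hab : a ≤ b)
include hA

theorem continuous_apply_IccExtend (V : C(Icc a b, E →L[𝕜] E)) (x : E) :
    Continuous fun s => A s (IccExtend hab V s x) :=
  Continuous.clm_apply_of_continuous_apply hA
    ((ContinuousLinearMap.apply 𝕜 E x).continuous.comp V.continuous.Icc_extend')

variable [NormedSpace ℝ E] [SMulCommClass ℝ 𝕜 E]

noncomputable def strongPicard (t₀ : ℝ) (V₀ : E →L[𝕜] E) (V : C(Icc a b, E →L[𝕜] E)) :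
    C(Icc a b, E →L[𝕜] E) where
  toFun t := V₀ + intervalIntegralCLM (fun s => A s ∘L IccExtend hab V s)
    (continuous_apply_IccExtend hA hab V) t₀ t
  continuous_toFun := continuous_const.add <|
    (continuous_intervalIntegralCLM_right (B := fun s => A s ∘L IccExtend hab V s)
      (continuous_apply_IccExtend hA hab V) t₀).comp continuous_subtype_val

variable {t₀ : ℝ} {V₀ : E →L[𝕜] E}

theorem strongPicard_apply_apply (V : C(Icc a b, E →L[𝕜] E)) (t : Icc a b) (x : E) :
    strongPicard hA hab t₀ V₀ V t x = V₀ x + ∫ s in t₀..t, A s (IccExtend hab V s x) :=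
  rfl

section Contraction

variable {L : ℝ} (hL : ∀ s ∈ Icc a b, ‖A s‖ ≤ L) (ht₀ : t₀ ∈ Icc a b)
include hL ht₀

theorem norm_strongPicard_sub_le {V W : C(Icc a b, E →L[𝕜] E)} {c : ℝ} {k : ℕ} (hc₀ : 0 ≤ c)
    (hVW : ∀ s : Icc a b, ‖V s - W s‖ ≤ c * |(s : ℝ) - t₀| ^ k) (t : Icc a b) :
    ‖strongPicard hA hab t₀ V₀ V t - strongPicard hA hab t₀ V₀ W t‖ ≤
      L * c * (|(t : ℝ) - t₀| ^ (k + 1) / (k + 1)) := by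
  have hL₀ : 0 ≤ L := (norm_nonneg _).trans (hL a (left_mem_Icc.2 hab))
  refine ContinuousLinearMap.opNorm_le_bound _ (by positivity) fun x => ?_
  rw [sub_apply, strongPicard_apply_apply, strongPicard_apply_apply, add_sub_add_left_eq_sub,
    ← integral_sub ((continuous_apply_IccExtend hA hab V x).intervalIntegrable _ _)
      ((continuous_apply_IccExtend hA hab W x).intervalIntegrable _ _), norm_intervalIntegral_eq]
  have hbound : ∀ s ∈ Ι t₀ (t : ℝ),
        ‖A s (IccExtend hab V s x) - A s (IccExtend hab W s x)‖ ≤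
          L * c * ‖x‖ * |s - t₀| ^ k := by
    intro s hs
    have hs' : s ∈ Icc a b := uIcc_subset_Icc ht₀ t.2 (uIoc_subset_uIcc hs)
    rw [← map_sub, IccExtend_of_mem _ _ hs', IccExtend_of_mem _ _ hs', ← sub_apply]
    calc ‖A s ((V ⟨s, hs'⟩ - W ⟨s, hs'⟩) x)‖ ≤ L * (c * |s - t₀| ^ k * ‖x‖) :=
          (A s).le_of_opNorm_le (hL s hs') _ |>.trans <| by
            gcongr; exact (V ⟨s, hs'⟩ - W ⟨s, hs'⟩).le_of_opNorm_le (hVW ⟨s, hs'⟩) x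
      _ = L * c * ‖x‖ * |s - t₀| ^ k := by ring
  calc ‖∫ s in Ι t₀ (t : ℝ), A s (IccExtend hab V s x) - A s (IccExtend hab W s x)‖
      ≤ ∫ s in Ι t₀ (t : ℝ), L * c * ‖x‖ * |s - t₀| ^ k :=
        MeasureTheory.norm_integral_le_of_norm_le (Continuous.integrableOn_uIoc (by fun_prop))
          ((MeasureTheory.ae_restrict_mem measurableSet_uIoc).mono hbound)
    _ = L * c * (|(t : ℝ) - t₀| ^ (k + 1) / (k + 1)) * ‖x‖ := by
        rw [MeasureTheory.integral_const_mul, integral_pow_abs_sub_uIoc]; ring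

theorem norm_strongPicard_iterate_sub_le (k : ℕ) (V W : C(Icc a b, E →L[𝕜] E)) (t : Icc a b) :
    ‖(strongPicard hA hab t₀ V₀)^[k] V t - (strongPicard hA hab t₀ V₀)^[k] W t‖ ≤
      (L * |(t : ℝ) - t₀|) ^ k / k.factorial * dist V W := by
  induction k generalizing t with
  | zero => simpa [dist_eq_norm] using ContinuousMap.dist_apply_le_dist (f := V) (g := W) t
  | succ k ih =>
    have hL₀ : 0 ≤ L := (norm_nonneg _).trans (hL a (left_mem_Icc.2 hab))
    rw [iterate_succ_apply', iterate_succ_apply']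
    refine (norm_strongPicard_sub_le hA hab hL ht₀ (c := L ^ k / k.factorial * dist V W)
      (by positivity) (fun s => (ih s).trans_eq (by ring)) t).trans_eq ?_
    rw [Nat.factorial_succ]; push_cast; field_simp; ring

end Contraction

theorem exists_isFixedPt_strongPicard (ht₀ : t₀ ∈ Icc a b) :
    ∃ U, IsFixedPt (strongPicard hA hab t₀ V₀) U := by
  obtain ⟨L, hL₀, hL⟩ := (isCompact_Icc (a := a) (b := b)).exists_bound_of_continuous_apply hA
  obtain ⟨k, hk⟩ := (FloorSemiring.tendsto_pow_div_factorial_atTop (L * (b - a))).eventually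
    (gt_mem_nhds zero_lt_one) |>.exists
  have hq₀ : 0 ≤ (L * (b - a)) ^ k / k.factorial := by
    have := sub_nonneg.2 hab
    positivity
  have hcontr : ContractingWith ⟨_, hq₀⟩ (strongPicard hA hab t₀ V₀)^[k] := by
    refine ⟨hk, LipschitzWith.of_dist_le_mul fun V W => ?_⟩
    refine (ContinuousMap.dist_le (by positivity)).2 fun t => ?_
    rw [dist_eq_norm]
    refine (norm_strongPicard_iterate_sub_le hA hab hL ht₀ k V W t).trans ?_
    change _ ≤ (L * (b - a)) ^ k / k.factorial * dist V W
    have : |(t : ℝ) - t₀| ≤ b - a := abs_sub_le_iff.2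
      ⟨by linarith [t.2.1, t.2.2, ht₀.1, ht₀.2], by linarith [t.2.1, t.2.2, ht₀.1, ht₀.2]⟩
    gcongr
  have : Nonempty C(Icc a b, E →L[𝕜] E) := ⟨0⟩
  exact ⟨_, hcontr.isFixedPt_fixedPoint_iterate⟩

variable {U : C(Icc a b, E →L[𝕜] E)} (hU : IsFixedPt (strongPicard hA hab t₀ V₀) U)
include hU

theorem IccExtend_apply_eq_of_isFixedPt_strongPicard {s : ℝ} (hs : s ∈ Icc a b) (x : E) :
    IccExtend hab U s x = V₀ x + ∫ r in t₀..s, A r (IccExtend hab U r x) := by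
  rw [IccExtend_of_mem _ _ hs]
  conv_lhs => rw [← hU.eq]
  rfl

theorem hasDerivAt_IccExtend_of_isFixedPt_strongPicard {t : ℝ} (ht : t ∈ Ioo a b) (x : E) :
    HasDerivAt (fun s => IccExtend hab U s x) (A t (IccExtend hab U t x)) t := by
  have hF := ((continuous_apply_IccExtend hA hab U x).integral_hasStrictDerivAt t₀ t).hasDerivAt
  refine (hF.const_add (V₀ x)).congr_of_eventuallyEq ?_
  filter_upwards [Ioo_mem_nhds ht.1 ht.2] with s hs
  exact IccExtend_apply_eq_of_isFixedPt_strongPicard hA hab hU (Ioo_subset_Icc_self hs) x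

end Picard

section LinearODE

variable [NormedSpace ℝ E] {A : ℝ → E →L[𝕜] E} (hA : ∀ x, Continuous (A · x)) {a b t₀ : ℝ}
include hA

theorem eqOn_of_hasDerivAt_clm_apply (ht₀ : t₀ ∈ Ioo a b) {u v : ℝ → E}
    (hu : ∀ t ∈ Ioo a b, HasDerivAt u (A t (u t)) t)
    (hv : ∀ t ∈ Ioo a b, HasDerivAt v (A t (v t)) t) (h : u t₀ = v t₀) :
    EqOn u v (Ioo a b) := by
  obtain ⟨L, -, hL⟩ := (isCompact_Icc (a := a) (b := b)).exists_bound_of_continuous_apply hA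
  refine ODE_solution_unique_of_mem_Ioo (K := L.toNNReal) (s := fun _ => univ) (fun t ht => ?_)
    ht₀ (fun t ht => ⟨hu t ht, trivial⟩) (fun t ht => ⟨hv t ht, trivial⟩) h
  refine ((A t).lipschitz.weaken ?_).lipschitzOnWith
  rw [← NNReal.coe_le_coe, Real.coe_toNNReal']
  exact (hL t (Ioo_subset_Icc_self ht)).trans (le_max_left _ _)

theorem eqOn_of_hasDerivAt_apply (ht₀ : t₀ ∈ Ioo a b) {V W : ℝ → E →L[𝕜] E}
    (hV : ∀ t ∈ Ioo a b, ∀ x, HasDerivAt (V · x) (A t (V t x)) t)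
    (hW : ∀ t ∈ Ioo a b, ∀ x, HasDerivAt (W · x) (A t (W t x)) t) (h : V t₀ = W t₀) :
    EqOn V W (Ioo a b) := fun _ ht => ContinuousLinearMap.ext fun x =>
  eqOn_of_hasDerivAt_clm_apply hA ht₀ (fun s hs => hV s hs x) (fun s hs => hW s hs x)
    (by rw [h]) ht

theorem eq_of_forall_hasDerivAt_apply {V W : ℝ → E →L[𝕜] E}
    (hV : ∀ x t, HasDerivAt (V · x) (A t (V t x)) t)
    (hW : ∀ x t, HasDerivAt (W · x) (A t (W t x)) t) (h : V t₀ = W t₀) : V = W := by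
  funext t
  obtain ⟨a, b, ht, ht₀⟩ : ∃ a b, t ∈ Ioo a b ∧ t₀ ∈ Ioo a b :=
    ⟨min t t₀ - 1, max t t₀ + 1, by grind⟩
  exact eqOn_of_hasDerivAt_apply hA ht₀ (fun s _ x => hV x s) (fun s _ x => hW x s) h ht

variable [SMulCommClass ℝ 𝕜 E]

theorem exists_forall_mem_Ioo_hasDerivAt_apply (ht₀ : t₀ ∈ Icc a b) (V₀ : E →L[𝕜] E) :
    ∃ V : ℝ → E →L[𝕜] E, V t₀ = V₀ ∧ ∀ t ∈ Ioo a b, ∀ x, HasDerivAt (V · x) (A t (V t x)) t := by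
  have hab : a ≤ b := ht₀.1.trans ht₀.2
  obtain ⟨U, hU⟩ := exists_isFixedPt_strongPicard hA hab (V₀ := V₀) ht₀
  refine ⟨IccExtend hab U, ContinuousLinearMap.ext fun x => ?_,
    fun t ht x => hasDerivAt_IccExtend_of_isFixedPt_strongPicard hA hab hU ht x⟩
  rw [IccExtend_apply_eq_of_isFixedPt_strongPicard hA hab hU ht₀, integral_same, add_zero]

theorem exists_forall_hasDerivAt_apply (t₀ : ℝ) (V₀ : E →L[𝕜] E) :
    ∃ V : ℝ → E →L[𝕜] E, V t₀ = V₀ ∧ ∀ x t, HasDerivAt (V · x) (A t (V t x)) t := by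
  let I : ℕ → Set ℝ := fun n => Ioo (t₀ - (n + 1)) (t₀ + (n + 1))
  have hI : Monotone I := fun m n hmn => Ioo_subset_Ioo (by gcongr) (by gcongr)
  have ht₀I : ∀ n, t₀ ∈ I n := fun n =>
    ⟨sub_lt_self _ n.cast_add_one_pos, lt_add_of_pos_right _ n.cast_add_one_pos⟩
  choose U hU₀ hU using fun n : ℕ =>
    exists_forall_mem_Ioo_hasDerivAt_apply hA (Ioo_subset_Icc_self (ht₀I n)) V₀
  have hagree : ∀ m n : ℕ, ∀ t ∈ I m, t ∈ I n → U m t = U n t := by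
    have hmono : ∀ m n : ℕ, m ≤ n → EqOn (U m) (U n) (I m) := fun m n hmn =>
      eqOn_of_hasDerivAt_apply hA (ht₀I m) (hU m) (fun t ht => hU n t (hI hmn ht))
        (by rw [hU₀, hU₀])
    intro m n t hm hn
    rcases le_total m n with h | h
    exacts [hmono m n h hm, (hmono n m h hn).symm]
  let N : ℝ → ℕ := fun t => ⌈|t - t₀|⌉₊
  have hN : ∀ t, t ∈ I (N t) := fun t => by
    have := (Nat.le_ceil |t - t₀|).trans_lt (lt_add_one _)
    rw [abs_sub_lt_iff] at this
    exact ⟨by linarith, by linarith⟩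
  refine ⟨fun t => U (N t) t, hU₀ _, fun x t => (hU (N t) t (hN t) x).congr_of_eventuallyEq ?_⟩
  filter_upwards [Ioo_mem_nhds (hN t).1 (hN t).2] with s hs
  rw [hagree _ _ s (hN s) hs]

end LinearODE

end

/-- Existence and uniqueness of the strong solution of `V'(t) = A(t)V(t)`, `V(t₀) = V₀`,
for a strongly continuous family `A` of bounded operators. -/
theorem stmt_5 {H : Type*} [NormedAddCommGroup H] [InnerProductSpace ℂ H] [CompleteSpace H]
    (A : ℝ → H →L[ℂ] H) (hA : ∀ ψ : H, Continuous fun t => A t ψ)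
    (t₀ : ℝ) (V₀ : H →L[ℂ] H) :
    ∃! V : ℝ → H →L[ℂ] H, V t₀ = V₀ ∧
      ∀ (ψ : H) (t : ℝ), HasDerivAt (fun s => V s ψ) (A t (V t ψ)) t := by
  obtain ⟨V, hV₀, hV⟩ := exists_forall_hasDerivAt_apply hA t₀ V₀
  exact ⟨V, ⟨hV₀, hV⟩, fun W ⟨hW₀, hW⟩ =>
    eq_of_forall_hasDerivAt_apply hA hW hV (hW₀.trans hV₀.symm)⟩
end

section
/- Let H be a complex Hilbert space, A : ℝ → B(H) strongly continuous, and suppose V₁, V₂ : ℝ → B(H) are locally norm-bounded weak solutions of V'(t) = A(t)V(t) with the same initial condition V₁(t₀) = V₂(t₀), meaning that for all φ, ψ ∈ H the scalar functions t ↦ ⟨φ, V_i(t)ψ⟩ are differentiable with derivative ⟨φ, A(t)V_i(t)ψ⟩. Then V₁(t) = V₂(t) for all t ∈ ℝ. -/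
/-!
Let `w = (V₁ - V₂) ψ`. Testing against the single vector `φ = w t` turns the weak equation into
the estimate `‖w t‖ ≤ C ∫_{t₀}^{t} ‖w s‖ ds`, where `C` bounds `‖A‖` on a compact time interval
by Banach–Steinhaus. Iterating it from the local bound `‖w‖ ≤ K` gives
`‖w t‖ ≤ K (C (t - t₀))ⁿ / n!` for every `n`, hence `w t = 0`; reversing time handles `t < t₀`.
-/

open Set Filter Topology
open scoped InnerProductSpace

theorem IsCompact.exists_forall_opNorm_le {𝕜 E F X : Type*} [NontriviallyNormedField 𝕜]
    [NormedAddCommGroup E] [NormedSpace 𝕜 E] [CompleteSpace E] [SeminormedAddCommGroup F]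
    [NormedSpace 𝕜 F] [TopologicalSpace X] {s : Set X} {A : X → E →L[𝕜] F} (hs : IsCompact s)
    (hA : ∀ ψ, ContinuousOn (fun t => A t ψ) s) : ∃ C, ∀ t ∈ s, ‖A t‖ ≤ C := by
  obtain ⟨C, hC⟩ := banach_steinhaus (g := fun t : s => A t) fun ψ => by
    obtain ⟨C, hC⟩ := hs.exists_bound_of_continuousOn (hA ψ)
    exact ⟨C, fun t => hC t t.2⟩
  exact ⟨C, fun t ht => hC ⟨t, ht⟩⟩

theorem hasDerivAt_mul_pow_succ_div_factorial (K C t₀ t : ℝ) (n : ℕ) :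
    HasDerivAt (fun t => K * (C * (t - t₀)) ^ (n + 1) / (n + 1).factorial)
      (C * (K * (C * (t - t₀)) ^ n / n.factorial)) t := by
  have h := ((((hasDerivAt_id t).sub_const t₀).const_mul C).pow (n + 1)).const_mul K
  refine (h.div_const ((n + 1).factorial : ℝ)).congr_deriv ?_
  rw [Nat.factorial_succ, Nat.add_sub_cancel, id]
  push_cast
  field_simp

section WeakDerivative

variable {𝕜 E : Type*} [RCLike 𝕜] [NormedAddCommGroup E] [InnerProductSpace 𝕜 E]

theorem image_norm_le_of_weak_deriv_right_le_deriv_boundary {w w' : ℝ → E} {a b : ℝ}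
    (hw : ∀ φ, ContinuousOn (fun s => ⟪φ, w s⟫_𝕜) (Icc a b))
    (hw' : ∀ φ, ∀ x ∈ Ico a b, HasDerivWithinAt (fun s => ⟪φ, w s⟫_𝕜) ⟪φ, w' x⟫_𝕜 (Ici x) x)
    {B B' : ℝ → ℝ} (ha : ‖w a‖ ≤ B a) (hB : ∀ x, HasDerivAt B (B' x) x)
    (bound : ∀ x ∈ Ico a b, ‖w' x‖ ≤ B' x) ⦃x : ℝ⦄ (hx : x ∈ Icc a b) : ‖w x‖ ≤ B x := by
  have hB_nonneg : 0 ≤ B x :=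
    image_le_of_deriv_right_le_deriv_boundary continuousOn_const
      (fun _ _ => hasDerivWithinAt_const _ _ 0) ((norm_nonneg _).trans ha)
      (fun y _ => (hB y).continuousAt.continuousWithinAt) (fun y _ => (hB y).hasDerivWithinAt)
      (fun y hy => (norm_nonneg _).trans (bound y hy)) hx
  have hsq : ‖w x‖ * ‖w x‖ ≤ ‖w x‖ * B x := by
    have h := image_norm_le_of_norm_deriv_right_le_deriv_boundary (hw (w x)) (hw' (w x))
      (B := fun s => ‖w x‖ * B s) (B' := fun s => ‖w x‖ * B' s)
      ((norm_inner_le_norm _ _).trans (by gcongr)) (fun s => (hB s).const_mul _)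
      (fun s hs => (norm_inner_le_norm _ _).trans (by gcongr; exact bound s hs)) hx
    rwa [← inner_self_re_eq_norm, inner_self_eq_norm_mul_norm] at h
  rcases (norm_nonneg (w x)).eq_or_lt with hzero | hpos
  · rwa [← hzero]
  · exact le_of_mul_le_mul_left hsq hpos

def IsWeakSolution (A : ℝ → E →L[𝕜] E) (w : ℝ → E) : Prop :=
  ∀ φ t, HasDerivAt (fun s => ⟪φ, w s⟫_𝕜) ⟪φ, A t (w t)⟫_𝕜 t

namespace IsWeakSolution

variable {A : ℝ → E →L[𝕜] E} {w w₁ w₂ : ℝ → E}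

theorem sub (hw₁ : IsWeakSolution A w₁) (hw₂ : IsWeakSolution A w₂) :
    IsWeakSolution A fun t => w₁ t - w₂ t := fun φ t => by
  simp only [inner_sub_right, map_sub]
  exact (hw₁ φ t).sub (hw₂ φ t)

theorem comp_const_sub (hw : IsWeakSolution A w) (a : ℝ) :
    IsWeakSolution (fun t => -A (a - t)) fun t => w (a - t) := fun φ t => by
  simpa only [neg_apply, inner_neg_right] using
    (hw φ (a - t)).comp_const_sub a t

theorem norm_le_pow_div_factorial (hw : IsWeakSolution A w) {t₀ b C K : ℝ}
    (hA : ∀ t ∈ Icc t₀ b, ‖A t‖ ≤ C) (hK : ∀ t ∈ Icc t₀ b, ‖w t‖ ≤ K) (h₀ : w t₀ = 0) (n : ℕ) :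
    ∀ t ∈ Icc t₀ b, ‖w t‖ ≤ K * (C * (t - t₀)) ^ n / n.factorial := by
  induction n with
  | zero => simpa using hK
  | succ n ih =>
    refine image_norm_le_of_weak_deriv_right_le_deriv_boundary
      (fun φ => HasDerivAt.continuousOn fun s _ => hw φ s)
      (fun φ s _ => (hw φ s).hasDerivWithinAt) (by simp [h₀])
      (hasDerivAt_mul_pow_succ_div_factorial K C t₀ · n) fun s hs => ?_
    have hs' : s ∈ Icc t₀ b := Ico_subset_Icc_self hs
    have hC : 0 ≤ C := (norm_nonneg _).trans (hA s hs')
    calc ‖A s (w s)‖ ≤ ‖A s‖ * ‖w s‖ := (A s).le_opNorm _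
      _ ≤ C * (K * (C * (s - t₀)) ^ n / n.factorial) := by gcongr; exacts [hA s hs', ih s hs']

theorem eq_zero_of_le [CompleteSpace E] (hw : IsWeakSolution A w)
    (hA : ∀ ψ, Continuous fun t => A t ψ) {t₀ b M : ℝ} (hM : ∀ t ∈ Icc t₀ b, ‖w t‖ ≤ M)
    (h₀ : w t₀ = 0) (hb : t₀ ≤ b) : w b = 0 := by
  obtain ⟨C, hC⟩ := isCompact_Icc.exists_forall_opNorm_le fun ψ => (hA ψ).continuousOn
  have hlim : Tendsto (fun n : ℕ => M * (C * (b - t₀)) ^ n / n.factorial) atTop (𝓝 0) := by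
    simpa only [mul_div_assoc, mul_zero] using
      (FloorSemiring.tendsto_pow_div_factorial_atTop (C * (b - t₀))).const_mul M
  exact norm_le_zero_iff.1 <| ge_of_tendsto' hlim fun n =>
    hw.norm_le_pow_div_factorial hC hM h₀ n b ⟨hb, le_rfl⟩

theorem eq_zero [CompleteSpace E] (hw : IsWeakSolution A w) (hA : ∀ ψ, Continuous fun t => A t ψ)
    (hbd : ∀ a b, ∃ M, ∀ t ∈ Icc a b, ‖w t‖ ≤ M) {t₀ : ℝ} (h₀ : w t₀ = 0) (t : ℝ) : w t = 0 := by
  rcases le_total t₀ t with h | h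
  · obtain ⟨M, hM⟩ := hbd t₀ t
    exact hw.eq_zero_of_le hA hM h₀ h
  · obtain ⟨M, hM⟩ := hbd t t₀
    -- reflect time about the midpoint of `[t, t₀]`
    simpa using (hw.comp_const_sub (t + t₀)).eq_zero_of_le (fun ψ => ((hA ψ).comp
      (continuous_sub_left _)).neg) (fun s hs => hM _ ⟨by linarith [hs.2], by linarith [hs.1]⟩)
      (by simpa using h₀) h

end IsWeakSolution

end WeakDerivative

/-- Uniqueness of locally norm-bounded weak solutions of `V'(t) = A(t)V(t)`:
two such solutions with the same initial condition agree everywhere. -/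
theorem stmt_6 {H : Type*} [NormedAddCommGroup H] [InnerProductSpace ℂ H] [CompleteSpace H]
    (A V₁ V₂ : ℝ → H →L[ℂ] H) (hA : ∀ ψ : H, Continuous fun t => A t ψ) (t₀ : ℝ)
    (hbd₁ : ∀ a b : ℝ, ∃ M : ℝ, ∀ t ∈ Set.Icc a b, ‖V₁ t‖ ≤ M)
    (hbd₂ : ∀ a b : ℝ, ∃ M : ℝ, ∀ t ∈ Set.Icc a b, ‖V₂ t‖ ≤ M)
    (hw₁ : ∀ (φ ψ : H) (t : ℝ),
      HasDerivAt (fun s => (inner ℂ φ (V₁ s ψ) : ℂ)) (inner ℂ φ (A t (V₁ t ψ)) : ℂ) t)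
    (hw₂ : ∀ (φ ψ : H) (t : ℝ),
      HasDerivAt (fun s => (inner ℂ φ (V₂ s ψ) : ℂ)) (inner ℂ φ (A t (V₂ t ψ)) : ℂ) t)
    (hinit : V₁ t₀ = V₂ t₀) :
    ∀ t : ℝ, V₁ t = V₂ t := by
  intro t
  ext ψ
  have hw : IsWeakSolution A fun s => V₁ s ψ - V₂ s ψ :=
    IsWeakSolution.sub (hw₁ · ψ) (hw₂ · ψ)
  have hbd : ∀ a b, ∃ M, ∀ s ∈ Icc a b, ‖V₁ s ψ - V₂ s ψ‖ ≤ M := fun a b => by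
    obtain ⟨M₁, hM₁⟩ := hbd₁ a b
    obtain ⟨M₂, hM₂⟩ := hbd₂ a b
    refine ⟨M₁ * ‖ψ‖ + M₂ * ‖ψ‖, fun s hs => ?_⟩
    calc ‖V₁ s ψ - V₂ s ψ‖ ≤ ‖V₁ s‖ * ‖ψ‖ + ‖V₂ s‖ * ‖ψ‖ :=
          (norm_sub_le _ _).trans (add_le_add ((V₁ s).le_opNorm ψ) ((V₂ s).le_opNorm ψ))
      _ ≤ M₁ * ‖ψ‖ + M₂ * ‖ψ‖ := by gcongr; exacts [hM₁ s hs, hM₂ s hs]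
  exact sub_eq_zero.1 (hw.eq_zero hA hbd (sub_eq_zero.2 (congrArg (· ψ) hinit)) t)
end

section
/- Let H be a complex Hilbert space, A : ℝ → B(H) strongly continuous, and let V be the unique strong solution of V'(t) = A(t)V(t) with V(t₀) = V₀ where V₀ ∈ B(H) is invertible. Then V(t) is invertible for every t ∈ ℝ, and the inverse W(t) = V(t)⁻¹ is the strong solution of W'(t) = −W(t)A(t) with W(t₀) = V₀⁻¹. -/
/-!
The map `t ↦ V t` is norm-continuous: on a compact interval `A` and `V` are uniformly bounded
(Banach–Steinhaus), so the strong derivative `A V` makes `V` Lipschitz there. Grönwall's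
inequality, run forwards and backwards in time from `t₀`, bounds `‖V t₀ ψ‖` by a multiple of
`‖V s ψ‖` uniformly for `s` in compacts, so the inverses `V s⁻¹` that exist are locally uniformly
bounded. Hence `{t | V t invertible}` is open (units are open) and closed (a unit within
`‖u⁻¹‖⁻¹` of an element makes that element a unit), so it is all of `ℝ`. Finally
`W s - W t = -W s (V s - V t) W t` and norm-continuity of `W = V⁻¹` give `W' = -W A` strongly.
-/

open Set Filter Topology
open scoped Ring

section NormedRing

variable {R : Type*} [NormedRing R] [HasSummableGeomSeries R]

theorem IsUnit.of_norm_sub_mul_norm_inverse_lt_one {x y : R} (hx : IsUnit x)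
    (h : ‖y - x‖ * ‖x⁻¹ʳ‖ < 1) : IsUnit y := by
  nontriviality R
  obtain ⟨u, rfl⟩ := hx
  rw [Ring.inverse_unit] at h
  refine ⟨u.ofNearby y ?_, rfl⟩
  rwa [← one_div, lt_div_iff₀ (Units.norm_pos u⁻¹)]

theorem isClosed_setOf_isUnit_of_locally_bounded_inverse {X : Type*} [TopologicalSpace X]
    {f : X → R} (hf : Continuous f) (hbd : ∀ x, ∃ C, ∀ᶠ y in 𝓝 x, ‖(f y)⁻¹ʳ‖ ≤ C) :
    IsClosed {x | IsUnit (f x)} := by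
  refine isClosed_iff_frequently.2 fun x hx => ?_
  obtain ⟨C, hC⟩ := hbd x
  have hnear : ∀ᶠ y in 𝓝 x, ‖f x - f y‖ * C < 1 := by
    have : Tendsto (fun y => ‖f x - f y‖ * C) (𝓝 x) (𝓝 0) := by
      simpa using ((tendsto_const_nhds (x := f x)).sub (hf.tendsto x)).norm.mul_const C
    exact this.eventually (gt_mem_nhds one_pos)
  obtain ⟨y, hy, hCy, hxy⟩ := (hx.and_eventually (hC.and hnear)).exists
  exact hy.of_norm_sub_mul_norm_inverse_lt_one
    ((mul_le_mul_of_nonneg_left hCy (norm_nonneg _)).trans_lt hxy)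

theorem isUnit_of_locally_bounded_inverse {X : Type*} [TopologicalSpace X]
    [PreconnectedSpace X] {f : X → R} (hf : Continuous f)
    (hbd : ∀ x, ∃ C, ∀ᶠ y in 𝓝 x, ‖(f y)⁻¹ʳ‖ ≤ C)
    {x₀ : X} (hx₀ : IsUnit (f x₀)) (x : X) : IsUnit (f x) := by
  have hclopen : IsClopen {x | IsUnit (f x)} :=
    ⟨isClosed_setOf_isUnit_of_locally_bounded_inverse hf hbd, Units.isOpen.preimage hf⟩
  exact eq_univ_iff_forall.1 (hclopen.eq_univ ⟨x₀, hx₀⟩) x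

end NormedRing

section Operators

variable {𝕜 E F : Type*} [NontriviallyNormedField 𝕜] [NormedAddCommGroup E] [NormedSpace 𝕜 E]
  [NormedAddCommGroup F] [NormedSpace 𝕜 F]

theorem ContinuousLinearMap.inverse_apply_apply {T : E →L[𝕜] E} (hT : IsUnit T) (x : E) :
    T⁻¹ʳ (T x) = x := by
  rw [← mul_apply_eq_comp, Ring.inverse_mul_cancel _ hT, one_apply_eq_self]

theorem ContinuousLinearMap.apply_inverse_apply {T : E →L[𝕜] E} (hT : IsUnit T) (x : E) :
    T (T⁻¹ʳ x) = x := by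
  rw [← mul_apply_eq_comp, Ring.mul_inverse_cancel _ hT, one_apply_eq_self]

theorem ContinuousLinearMap.norm_inverse_le_of_le_mul_norm_apply {T : E →L[𝕜] E} {K : ℝ}
    (hK : 0 ≤ K) (h : ∀ ψ, ‖ψ‖ ≤ K * ‖T ψ‖) : ‖T⁻¹ʳ‖ ≤ K := by
  by_cases hT : IsUnit T
  · obtain ⟨u, rfl⟩ := hT
    rw [Ring.inverse_unit]
    refine opNorm_le_bound _ hK fun φ => ?_
    simpa [← mul_apply_eq_comp] using h ((↑u⁻¹ : E →L[𝕜] E) φ)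
  · rw [Ring.inverse_non_unit _ hT, norm_zero]
    exact hK

theorem IsCompact.exists_bound_of_continuousOn_apply [CompleteSpace E] {X : Type*}
    [TopologicalSpace X] {K : Set X} (hK : IsCompact K) {B : X → E →L[𝕜] F}
    (hB : ∀ ψ, ContinuousOn (fun x => B x ψ) K) : ∃ M, ∀ x ∈ K, ‖B x‖ ≤ M := by
  obtain ⟨M, hM⟩ := banach_steinhaus (g := fun x : K => B x) fun ψ => by
    obtain ⟨C, hC⟩ := hK.exists_bound_of_continuousOn (hB ψ)
    exact ⟨C, fun x => hC x x.2⟩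
  exact ⟨M, fun x hx => hM ⟨x, hx⟩⟩

variable [NormedSpace ℝ F]

theorem norm_sub_le_of_hasDerivAt_apply {V D : ℝ → E →L[𝕜] F} {a b M : ℝ}
    (hV : ∀ ψ, ∀ t ∈ Icc a b, HasDerivAt (fun s => V s ψ) (D t ψ) t)
    (hD : ∀ t ∈ Icc a b, ‖D t‖ ≤ M) {s u : ℝ} (hs : s ∈ Icc a b) (hu : u ∈ Icc a b) :
    ‖V s - V u‖ ≤ M * |s - u| := by
  have hM : 0 ≤ M := (norm_nonneg _).trans (hD s hs)
  refine ContinuousLinearMap.opNorm_le_bound _ (by positivity) fun ψ => ?_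
  have hderiv : ∀ t ∈ Icc a b, ‖D t ψ‖ ≤ M * ‖ψ‖ := fun t ht =>
    ((D t).le_opNorm ψ).trans (by gcongr; exact hD t ht)
  calc ‖(V s - V u) ψ‖ = ‖V s ψ - V u ψ‖ := rfl
    _ ≤ M * ‖ψ‖ * ‖s - u‖ := (convex_Icc a b).norm_image_sub_le_of_norm_hasDerivWithin_le
        (fun t ht => (hV ψ t ht).hasDerivWithinAt) hderiv hu hs
    _ = M * |s - u| * ‖ψ‖ := by rw [Real.norm_eq_abs]; ring

theorem continuous_of_hasDerivAt_apply {V D : ℝ → E →L[𝕜] F}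
    (hV : ∀ ψ t, HasDerivAt (fun s => V s ψ) (D t ψ) t)
    (hD : ∀ a b, ∃ M, ∀ t ∈ Icc a b, ‖D t‖ ≤ M) : Continuous V := by
  refine continuous_iff_continuousAt.2 fun t => ?_
  obtain ⟨M, hM⟩ := hD (t - 1) (t + 1)
  have hlip : LipschitzOnWith (Real.toNNReal M) V (Icc (t - 1) (t + 1)) :=
    LipschitzOnWith.of_dist_le' fun s hs u hu => by
      simpa [dist_eq_norm, Real.dist_eq] using
        norm_sub_le_of_hasDerivAt_apply (fun ψ r _ => hV ψ r) hM hs hu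
  exact hlip.continuousOn.continuousAt (Icc_mem_nhds (by linarith) (by linarith))

end Operators

section Gronwall

variable {E : Type*} [NormedAddCommGroup E] [NormedSpace ℝ E]

theorem norm_le_norm_mul_exp_of_norm_deriv_le {f f' : ℝ → E} {a b M : ℝ}
    (hf : ∀ t ∈ Icc a b, HasDerivAt f (f' t) t) (hbound : ∀ t ∈ Icc a b, ‖f' t‖ ≤ M * ‖f t‖)
    {s u : ℝ} (hs : s ∈ Icc a b) (hu : u ∈ Icc a b) (hsu : s ≤ u) :
    ‖f u‖ ≤ ‖f s‖ * Real.exp (M * (u - s)) := by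
  have hsub : Icc s u ⊆ Icc a b := Icc_subset_Icc hs.1 hu.2
  have := norm_le_gronwallBound_of_norm_deriv_right_le (δ := ‖f s‖) (ε := 0)
    (fun t ht => (hf t (hsub ht)).continuousAt.continuousWithinAt)
    (fun t ht => (hf t (hsub (Ico_subset_Icc_self ht))).hasDerivWithinAt) le_rfl
    (fun t ht => by simpa using hbound t (hsub (Ico_subset_Icc_self ht))) u ⟨hsu, le_rfl⟩
  rwa [gronwallBound_ε0] at this

theorem norm_le_norm_mul_exp_abs_of_norm_deriv_le {f f' : ℝ → E} {a b M : ℝ}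
    (hf : ∀ t ∈ Icc a b, HasDerivAt f (f' t) t) (hbound : ∀ t ∈ Icc a b, ‖f' t‖ ≤ M * ‖f t‖)
    {s u : ℝ} (hs : s ∈ Icc a b) (hu : u ∈ Icc a b) :
    ‖f u‖ ≤ ‖f s‖ * Real.exp (M * |u - s|) := by
  rcases le_total s u with hsu | hus
  · simpa [abs_of_nonneg (sub_nonneg.2 hsu)] using
      norm_le_norm_mul_exp_of_norm_deriv_le hf hbound hs hu hsu
  · have hrefl : ∀ t ∈ Icc (-b) (-a), -t ∈ Icc a b :=
      fun t ht => ⟨le_neg_of_le_neg ht.2, neg_le_of_neg_le ht.1⟩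
    have := norm_le_norm_mul_exp_of_norm_deriv_le (f := fun r => f (-r))
      (f' := fun r => -f' (-r))
      (fun t ht => by
        simpa [Function.comp_def] using (hf (-t) (hrefl t ht)).scomp t (hasDerivAt_neg t))
      (fun t ht => by simpa using hbound (-t) (hrefl t ht))
      ⟨neg_le_neg hs.2, neg_le_neg hs.1⟩ ⟨neg_le_neg hu.2, neg_le_neg hu.1⟩ (neg_le_neg hus)
    simpa [abs_of_nonpos (sub_nonpos.2 hus), neg_add_eq_sub] using this

end Gronwall

section InverseDerivative

variable {𝕜 E : Type*} [NontriviallyNormedField 𝕜] [NormedAlgebra ℝ 𝕜] [NormedAddCommGroup E]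
  [NormedSpace 𝕜 E] [NormedSpace ℝ E] [IsScalarTower ℝ 𝕜 E] [CompleteSpace E]

theorem hasDerivAt_inverse_apply {V : ℝ → E →L[𝕜] E} {t : ℝ} (ht : IsUnit (V t))
    (hV : ContinuousAt V t) {ψ φ' : E} (hφ' : HasDerivAt (fun s => V s ((V t)⁻¹ʳ ψ)) φ' t) :
    HasDerivAt (fun s => (V s)⁻¹ʳ ψ) (-((V t)⁻¹ʳ φ')) t := by
  have hinv : ContinuousAt (fun s => (V s)⁻¹ʳ) t := by
    have := NormedRing.inverse_continuousAt ht.unit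
    rw [ht.unit_spec] at this
    exact this.comp hV
  rw [hasDerivAt_iff_tendsto_slope] at hφ' ⊢
  have happly := (isBoundedBilinearMap_apply.continuous.tendsto _).comp
    ((hinv.tendsto.mono_left nhdsWithin_le_nhds).prodMk_nhds hφ')
  -- near `t`, the slope of `s ↦ V s⁻¹ ψ` is `-V s⁻¹` applied to the slope of `s ↦ V s (V t⁻¹ ψ)`
  refine happly.neg.congr' ?_
  filter_upwards [nhdsWithin_le_nhds (hV.eventually (Units.isOpen.mem_nhds ht))] with s hs
  simp only [Function.comp_apply, slope, vsub_eq_sub, ContinuousLinearMap.apply_inverse_apply ht,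
    map_sub, ContinuousLinearMap.map_smul_of_tower, ContinuousLinearMap.inverse_apply_apply hs,
    smul_sub, neg_sub]

end InverseDerivative

section StrongSolution

variable {𝕜 E : Type*} [NontriviallyNormedField 𝕜] [NormedAddCommGroup E] [NormedSpace 𝕜 E]
  [NormedSpace ℝ E]

def IsStrongSolution (A V : ℝ → E →L[𝕜] E) : Prop :=
  ∀ ψ t, HasDerivAt (fun s => V s ψ) (A t (V t ψ)) t

variable {A V : ℝ → E →L[𝕜] E}

theorem IsStrongSolution.continuous_apply (h : IsStrongSolution A V) (ψ : E) :
    Continuous fun t => V t ψ :=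
  continuous_iff_continuousAt.2 fun t => (h ψ t).continuousAt

theorem IsStrongSolution.continuous [CompleteSpace E] (hA : ∀ ψ, Continuous fun t => A t ψ)
    (h : IsStrongSolution A V) : Continuous V := by
  refine continuous_of_hasDerivAt_apply (D := fun t => A t * V t) h fun a b => ?_
  obtain ⟨MA, hMA⟩ := (isCompact_Icc (a := a) (b := b)).exists_bound_of_continuousOn_apply
    fun ψ => (hA ψ).continuousOn
  obtain ⟨MV, hMV⟩ := (isCompact_Icc (a := a) (b := b)).exists_bound_of_continuousOn_apply
    fun ψ => (h.continuous_apply ψ).continuousOn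
  exact ⟨MA * MV, fun t ht => (norm_mul_le _ _).trans
    (mul_le_mul (hMA t ht) (hMV t ht) (norm_nonneg _) ((norm_nonneg _).trans (hMA t ht)))⟩

theorem IsStrongSolution.exists_le_mul_norm_apply [CompleteSpace E]
    (hA : ∀ ψ, Continuous fun t => A t ψ) (h : IsStrongSolution A V) {t₀ : ℝ}
    (ht₀ : IsUnit (V t₀)) (a b : ℝ) :
    ∃ K, 0 ≤ K ∧ ∀ s ∈ Icc a b, ∀ ψ, ‖ψ‖ ≤ K * ‖V s ψ‖ := by
  set I := Icc (min a t₀) (max b t₀)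
  have ht₀I : t₀ ∈ I := ⟨min_le_right _ _, le_max_right _ _⟩
  obtain ⟨M, hM⟩ := (isCompact_Icc : IsCompact I).exists_bound_of_continuousOn_apply
    fun ψ => (hA ψ).continuousOn
  have hM0 : 0 ≤ M := (norm_nonneg _).trans (hM t₀ ht₀I)
  refine ⟨‖(V t₀)⁻¹ʳ‖ * Real.exp (M * (max b t₀ - min a t₀)), by positivity, fun s hs ψ => ?_⟩
  have hsI : s ∈ I := ⟨(min_le_left _ _).trans hs.1, hs.2.trans (le_max_left _ _)⟩
  have hgronwall : ‖V t₀ ψ‖ ≤ ‖V s ψ‖ * Real.exp (M * |t₀ - s|) :=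
    norm_le_norm_mul_exp_abs_of_norm_deriv_le (fun r _ => h ψ r)
      (fun r hr => ((A r).le_opNorm _).trans (by gcongr; exact hM r hr)) hsI ht₀I
  have hdist : |t₀ - s| ≤ max b t₀ - min a t₀ :=
    abs_sub_le_of_le_of_le ht₀I.1 ht₀I.2 hsI.1 hsI.2
  calc ‖ψ‖ = ‖(V t₀)⁻¹ʳ (V t₀ ψ)‖ := by rw [ContinuousLinearMap.inverse_apply_apply ht₀]
    _ ≤ ‖(V t₀)⁻¹ʳ‖ * (‖V s ψ‖ * Real.exp (M * |t₀ - s|)) :=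
        ((V t₀)⁻¹ʳ.le_opNorm _).trans (by gcongr)
    _ ≤ ‖(V t₀)⁻¹ʳ‖ * (‖V s ψ‖ * Real.exp (M * (max b t₀ - min a t₀))) := by gcongr
    _ = _ := by ring

theorem IsStrongSolution.isUnit [CompleteSpace E] (hA : ∀ ψ, Continuous fun t => A t ψ)
    (h : IsStrongSolution A V) {t₀ : ℝ} (ht₀ : IsUnit (V t₀)) (t : ℝ) : IsUnit (V t) := by
  refine isUnit_of_locally_bounded_inverse (h.continuous hA) (fun t => ?_) ht₀ t
  obtain ⟨K, hK, hbelow⟩ := h.exists_le_mul_norm_apply hA ht₀ (t - 1) (t + 1)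
  exact ⟨K, eventually_of_mem (Icc_mem_nhds (by linarith) (by linarith)) fun s hs =>
    ContinuousLinearMap.norm_inverse_le_of_le_mul_norm_apply hK (hbelow s hs)⟩

end StrongSolution

/-- If `V` is the strong solution of `V'(t) = A(t)V(t)` with invertible initial condition `V₀`,
then `V(t)` is invertible for every `t`, and the inverse `W(t) = V(t)⁻¹` is the strong solution
of `W'(t) = -W(t)A(t)` with `W(t₀) = V₀⁻¹`. -/
theorem stmt_8 {H : Type*} [NormedAddCommGroup H] [InnerProductSpace ℂ H] [CompleteSpace H]
    (A : ℝ → H →L[ℂ] H) (hA : ∀ ψ : H, Continuous fun t => A t ψ)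
    (t₀ : ℝ) (V₀ W₀ : H →L[ℂ] H)
    (hW₀ : W₀ * V₀ = 1 ∧ V₀ * W₀ = 1)
    (V : ℝ → H →L[ℂ] H) (hVinit : V t₀ = V₀)
    (hV : ∀ (ψ : H) (t : ℝ), HasDerivAt (fun s => V s ψ) (A t (V t ψ)) t) :
    ∃ W : ℝ → H →L[ℂ] H, W t₀ = W₀ ∧
      (∀ t : ℝ, W t * V t = 1 ∧ V t * W t = 1) ∧
      ∀ (ψ : H) (t : ℝ), HasDerivAt (fun s => W s ψ) (-(W t (A t ψ))) t := by
  have hsol : IsStrongSolution A V := hV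
  set u : (H →L[ℂ] H)ˣ := ⟨V₀, W₀, hW₀.2, hW₀.1⟩
  have hVu : V t₀ = u := hVinit
  have hunit : ∀ t, IsUnit (V t) := hsol.isUnit hA (hVu ▸ u.isUnit)
  refine ⟨fun t => (V t)⁻¹ʳ, (congrArg Ring.inverse hVu).trans (Ring.inverse_unit u),
    fun t => ⟨Ring.inverse_mul_cancel _ (hunit t), Ring.mul_inverse_cancel _ (hunit t)⟩,
    fun ψ t => ?_⟩
  have hderiv := hasDerivAt_inverse_apply (hunit t) (hsol.continuous hA).continuousAt
    (hV ((V t)⁻¹ʳ ψ) t)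
  rwa [ContinuousLinearMap.apply_inverse_apply (hunit t)] at hderiv
end

section
/- Let H be a complex Hilbert space, A : ℝ → B(H) strongly continuous self-adjoint, and let g₀ ∈ B(H). Then g(t) = U(t,t₀) g₀ U(t,t₀)* is the unique strong solution of g'(t) = i[A(t), g(t)], g(t₀) = g₀, where U(t,t₀) is the unitary propagator solving i d/dt U(t,t₀)ψ = −A(t)U(t,t₀)ψ, U(t₀,t₀) = 1. In particular ‖g(t)‖ = ‖g₀‖ for all t. -/
/-!
The propagator is only strongly differentiable, so everything rests on a product rule for
`s ↦ B s (f s)` with `B` strongly differentiable: it holds as soon as `‖B s‖` is locally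
bounded. For the unitaries `U s` and `(U s)*` the bound is `1`, and the same estimate shows that
the inverse family `(U s)*` is strongly differentiable; for an arbitrary strong solution `g` the
bound comes from Banach–Steinhaus. The product rule gives the equation for `U g₀ U*`, and for
any solution `g` it shows that `s ↦ (U s)* g(s) U(s) ψ` has derivative zero, hence equals
`g₀ ψ`. The norm identity is the unitary invariance of the C⋆-norm.
-/

open ContinuousLinearMap Asymptotics Filter Topology

lemma isLittleO_smul_sub_of_tendsto_zero {E : Type*} [NormedAddCommGroup E] [NormedSpace ℝ E]
    {v : ℝ → E} {t : ℝ} (hv : Tendsto v (𝓝 t) (𝓝 0)) :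
    (fun s => (s - t) • v s) =o[𝓝 t] fun s => s - t :=
  ((isBigO_refl (fun s => s - t) _).smul_isLittleO ((isLittleO_one_iff ℝ).2 hv)).congr_right
    fun _ => mul_one _

lemma isBigO_apply_of_eventually_norm_le {α 𝕜 E F : Type*} [NontriviallyNormedField 𝕜]
    [NormedAddCommGroup E] [NormedSpace 𝕜 E] [NormedAddCommGroup F] [NormedSpace 𝕜 F]
    {l : Filter α} {B : α → E →L[𝕜] F} {K : ℝ} (hK : ∀ᶠ s in l, ‖B s‖ ≤ K) (f : α → E) :
    (fun s => B s (f s)) =O[l] f :=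
  IsBigO.of_bound K (hK.mono fun s hs => (B s).le_of_opNorm_le hs _)

lemma exists_eventually_norm_le_of_continuous_apply {X 𝕜 E F : Type*} [TopologicalSpace X]
    [WeaklyLocallyCompactSpace X] [NontriviallyNormedField 𝕜]
    [NormedAddCommGroup E] [NormedSpace 𝕜 E] [CompleteSpace E]
    [NormedAddCommGroup F] [NormedSpace 𝕜 F]
    {B : X → E →L[𝕜] F} (hB : ∀ x, Continuous fun s => B s x) (t : X) :
    ∃ K, ∀ᶠ s in 𝓝 t, ‖B s‖ ≤ K := by
  obtain ⟨N, hNc, hN⟩ := exists_compact_mem_nhds t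
  have hbdd : ∀ x, ∃ C, ∀ s : N, ‖B s x‖ ≤ C := fun x => by
    obtain ⟨C, hC⟩ := hNc.exists_bound_of_continuousOn (hB x).continuousOn
    exact ⟨C, fun s => hC s s.2⟩
  obtain ⟨K, hK⟩ := banach_steinhaus hbdd
  exact ⟨K, eventually_of_mem hN fun s hs => hK ⟨s, hs⟩⟩

section StrongDerivative

variable {E F : Type*} [NormedAddCommGroup E] [NormedSpace ℂ E]
  [NormedAddCommGroup F] [NormedSpace ℂ F] {t K : ℝ}

theorem HasDerivAt.clm_apply_of_locally_bounded {B : ℝ → E →L[ℂ] F} {D : E → F}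
    (hB : ∀ x, HasDerivAt (fun s => B s x) (D x) t) (hK : ∀ᶠ s in 𝓝 t, ‖B s‖ ≤ K)
    {f : ℝ → E} {f' : E} (hf : HasDerivAt f f' t) :
    HasDerivAt (fun s => B s (f s)) (D (f t) + B t f') t := by
  rw [hasDerivAt_iff_isLittleO] at hf ⊢
  have hcont : Tendsto (fun s => B s f' - B t f') (𝓝 t) (𝓝 0) := by
    simpa using (hB f').continuousAt.tendsto.sub_const (B t f')
  have hsum := (((isBigO_apply_of_eventually_norm_le hK _).trans_isLittleO hf).add
    (isLittleO_smul_sub_of_tendsto_zero hcont)).add (hasDerivAt_iff_isLittleO.1 (hB (f t)))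
  refine hsum.congr_left fun s => ?_
  simp only [map_sub, map_smul_of_tower, smul_sub, smul_add]
  abel

theorem hasDerivAt_inverse_apply_of_locally_bounded {B : ℝ → E →L[ℂ] F} {C : ℝ → F →L[ℂ] E}
    {D : E → F} (hCB : ∀ s x, C s (B s x) = x) (hBC : ∀ s y, B s (C s y) = y)
    (hB : ∀ x, HasDerivAt (fun s => B s x) (D x) t) (hK : ∀ᶠ s in 𝓝 t, ‖C s‖ ≤ K) (y : F) :
    HasDerivAt (fun s => C s y) (-C t (D (C t y))) t := by
  set x := C t y
  set w := C t (D x)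
  have hcont : Tendsto (fun s => B s w - B t w) (𝓝 t) (𝓝 0) := by
    simpa using (hB w).continuousAt.tendsto.sub_const (B t w)
  have he := (hasDerivAt_iff_isLittleO.1 (hB x)).neg_left.add
    (isLittleO_smul_sub_of_tendsto_zero hcont)
  rw [hasDerivAt_iff_isLittleO]
  -- the remainder `r s` equals `C s (B s (r s))`, and `B s (r s)` is the sum estimated in `he`
  refine ((isBigO_apply_of_eventually_norm_le hK _).trans_isLittleO he).congr_left fun s => ?_
  conv_rhs => rw [← hCB s (C s y - x - (s - t) • -w)]
  congr 1
  simp only [map_sub, map_smul_of_tower, map_neg, hBC, x, w]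
  module

end StrongDerivative

section Propagator

variable {H : Type*} [NormedAddCommGroup H] [InnerProductSpace ℂ H] [CompleteSpace H]

lemma adjoint_apply_apply_of_mem_unitary {u : H →L[ℂ] H} (hu : u ∈ unitary (H →L[ℂ] H))
    (x : H) : adjoint u (u x) = x := by
  simpa [star_eq_adjoint] using congr($(Unitary.star_mul_self_of_mem hu) x)

lemma apply_adjoint_apply_of_mem_unitary {u : H →L[ℂ] H} (hu : u ∈ unitary (H →L[ℂ] H))
    (x : H) : u (adjoint u x) = x := by
  simpa [star_eq_adjoint] using congr($(Unitary.mul_star_self_of_mem hu) x)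

lemma norm_le_one_of_mem_unitary {u : H →L[ℂ] H} (hu : u ∈ unitary (H →L[ℂ] H)) : ‖u‖ ≤ 1 :=
  opNorm_le_bound _ zero_le_one fun x => by rw [norm_map_of_mem_unitary hu, one_mul]

variable {A U : ℝ → H →L[ℂ] H}

lemma hasDerivAt_adjoint_propagator_apply (hU : ∀ t, U t ∈ unitary (H →L[ℂ] H))
    (hUode : ∀ ψ t, HasDerivAt (fun s => U s ψ) (Complex.I • A t (U t ψ)) t)
    (ψ : H) (t : ℝ) :
    HasDerivAt (fun s => adjoint (U s) ψ) (-(Complex.I • adjoint (U t) (A t ψ))) t := by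
  have := hasDerivAt_inverse_apply_of_locally_bounded (K := 1)
    (fun s => adjoint_apply_apply_of_mem_unitary (hU s))
    (fun s => apply_adjoint_apply_of_mem_unitary (hU s)) (fun x => hUode x t)
    (Eventually.of_forall fun s => norm_le_one_of_mem_unitary (Unitary.star_mem (hU s))) ψ
  simpa [apply_adjoint_apply_of_mem_unitary (hU t)] using this

lemma hasDerivAt_conj_propagator_apply (hU : ∀ t, U t ∈ unitary (H →L[ℂ] H))
    (hUode : ∀ ψ t, HasDerivAt (fun s => U s ψ) (Complex.I • A t (U t ψ)) t)
    (g₀ : H →L[ℂ] H) (ψ : H) (t : ℝ) :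
    HasDerivAt (fun s => (U s * g₀ * adjoint (U s)) ψ)
      (Complex.I • ((A t * (U t * g₀ * adjoint (U t)) - U t * g₀ * adjoint (U t) * A t) ψ)) t := by
  have hf : HasDerivAt (fun s => g₀ (adjoint (U s) ψ))
      (g₀ (-(Complex.I • adjoint (U t) (A t ψ)))) t :=
    (g₀.restrictScalars ℝ).hasFDerivAt.comp_hasDerivAt t
      (hasDerivAt_adjoint_propagator_apply hU hUode ψ t)
  refine (hf.clm_apply_of_locally_bounded (fun x => hUode x t)
    (Eventually.of_forall fun s => norm_le_one_of_mem_unitary (hU s))).congr_deriv ?_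
  simp only [sub_apply, mul_apply_eq_comp, smul_sub, map_neg, map_smul]
  abel

lemma hasDerivAt_adjoint_conj_of_hasDerivAt_commutator (hU : ∀ t, U t ∈ unitary (H →L[ℂ] H))
    (hUode : ∀ ψ t, HasDerivAt (fun s => U s ψ) (Complex.I • A t (U t ψ)) t)
    {g : ℝ → H →L[ℂ] H}
    (hg : ∀ ψ t, HasDerivAt (fun s => g s ψ) (Complex.I • ((A t * g t - g t * A t) ψ)) t)
    (ψ : H) (t : ℝ) : HasDerivAt (fun s => adjoint (U s) (g s (U s ψ))) 0 t := by
  obtain ⟨K, hK⟩ := exists_eventually_norm_le_of_continuous_apply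
    (fun x => continuous_iff_continuousAt.2 fun s => (hg x s).continuousAt) t
  have hgU : HasDerivAt (fun s => g s (U s ψ)) (Complex.I • A t (g t (U t ψ))) t := by
    refine ((hUode ψ t).clm_apply_of_locally_bounded (fun x => hg x t) hK).congr_deriv ?_
    simp only [sub_apply, mul_apply_eq_comp, smul_sub, map_smul]
    abel
  refine (hgU.clm_apply_of_locally_bounded
    (fun x => hasDerivAt_adjoint_propagator_apply hU hUode x t)
    (Eventually.of_forall fun s => norm_le_one_of_mem_unitary (Unitary.star_mem (hU s))))
    |>.congr_deriv ?_
  simp only [map_smul, neg_add_cancel]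

lemma eq_conj_propagator_of_hasDerivAt_commutator {g : ℝ → H →L[ℂ] H}
    (hU : ∀ t, U t ∈ unitary (H →L[ℂ] H))
    (hUode : ∀ ψ t, HasDerivAt (fun s => U s ψ) (Complex.I • A t (U t ψ)) t)
    {t₀ : ℝ} {g₀ : H →L[ℂ] H} (hU0 : U t₀ = 1) (hg0 : g t₀ = g₀)
    (hg : ∀ ψ t, HasDerivAt (fun s => g s ψ) (Complex.I • ((A t * g t - g t * A t) ψ)) t)
    (t : ℝ) : g t = U t * g₀ * adjoint (U t) := by
  have hconst (ψ : H) : adjoint (U t) (g t (U t ψ)) = g₀ ψ := by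
    have hderiv := hasDerivAt_adjoint_conj_of_hasDerivAt_commutator hU hUode hg ψ
    simpa [hU0, hg0, ← star_eq_adjoint] using
      is_const_of_deriv_eq_zero (fun s => (hderiv s).differentiableAt) (fun s => (hderiv s).deriv)
        t t₀
  ext φ
  simpa [apply_adjoint_apply_of_mem_unitary (hU t)] using
    congr(U t $(hconst (adjoint (U t) φ)))

end Propagator

theorem stmt_11_general {H : Type*} [NormedAddCommGroup H] [InnerProductSpace ℂ H] [CompleteSpace H]
    (A : ℝ → H →L[ℂ] H)
    (t₀ : ℝ) (g₀ : H →L[ℂ] H)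
    (U : ℝ → H →L[ℂ] H) (hU0 : U t₀ = 1)
    (hUuni : ∀ t : ℝ, ContinuousLinearMap.adjoint (U t) * U t = 1 ∧
        U t * ContinuousLinearMap.adjoint (U t) = 1)
    (hUode : ∀ (ψ : H) (t : ℝ),
        HasDerivAt (fun s => U s ψ) (Complex.I • (A t (U t ψ))) t) :
    (U t₀ * g₀ * ContinuousLinearMap.adjoint (U t₀) = g₀) ∧
    (∀ (ψ : H) (t : ℝ),
        HasDerivAt (fun s => (U s * g₀ * ContinuousLinearMap.adjoint (U s)) ψ)
          (Complex.I • ((A t * (U t * g₀ * ContinuousLinearMap.adjoint (U t))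
            - (U t * g₀ * ContinuousLinearMap.adjoint (U t)) * A t) ψ)) t) ∧
    (∀ g : ℝ → H →L[ℂ] H,
      (g t₀ = g₀ ∧ ∀ (ψ : H) (t : ℝ), HasDerivAt (fun s => g s ψ)
          (Complex.I • ((A t * g t - g t * A t) ψ)) t) →
      ∀ t : ℝ, g t = U t * g₀ * ContinuousLinearMap.adjoint (U t)) ∧
    ∀ t : ℝ, ‖U t * g₀ * ContinuousLinearMap.adjoint (U t)‖ = ‖g₀‖ := by
  have hU : ∀ t, U t ∈ unitary (H →L[ℂ] H) := hUuni
  refine ⟨by simp [hU0, ← star_eq_adjoint], hasDerivAt_conj_propagator_apply hU hUode g₀,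
    fun g ⟨hg0, hg⟩ => eq_conj_propagator_of_hasDerivAt_commutator hU hUode hU0 hg0 hg,
    fun t => ?_⟩
  rw [← star_eq_adjoint, CStarRing.norm_mul_mem_unitary _ (Unitary.star_mem (hU t)),
    CStarRing.norm_mem_unitary_mul _ (hU t)]

/-- For strongly continuous self-adjoint `A` with unitary propagator `U` (solving
`i d/dt U(t)ψ = -A(t)U(t)ψ`, `U(t₀) = 1`), the family `g(t) = U(t) g₀ U(t)*` is the unique
strong solution of `g'(t) = i[A(t), g(t)]`, `g(t₀) = g₀`, and `‖g(t)‖ = ‖g₀‖` for all `t`. -/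
theorem stmt_11 {H : Type*} [NormedAddCommGroup H] [InnerProductSpace ℂ H] [CompleteSpace H]
    (A : ℝ → H →L[ℂ] H) (hA : ∀ ψ : H, Continuous fun t => A t ψ)
    (hAsa : ∀ t : ℝ, ContinuousLinearMap.adjoint (A t) = A t)
    (t₀ : ℝ) (g₀ : H →L[ℂ] H)
    (U : ℝ → H →L[ℂ] H) (hU0 : U t₀ = 1)
    (hUuni : ∀ t : ℝ, ContinuousLinearMap.adjoint (U t) * U t = 1 ∧
        U t * ContinuousLinearMap.adjoint (U t) = 1)
    (hUode : ∀ (ψ : H) (t : ℝ),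
        HasDerivAt (fun s => U s ψ) (Complex.I • (A t (U t ψ))) t) :
    (U t₀ * g₀ * ContinuousLinearMap.adjoint (U t₀) = g₀) ∧
    (∀ (ψ : H) (t : ℝ),
        HasDerivAt (fun s => (U s * g₀ * ContinuousLinearMap.adjoint (U s)) ψ)
          (Complex.I • ((A t * (U t * g₀ * ContinuousLinearMap.adjoint (U t))
            - (U t * g₀ * ContinuousLinearMap.adjoint (U t)) * A t) ψ)) t) ∧
    (∀ g : ℝ → H →L[ℂ] H,
      (g t₀ = g₀ ∧ ∀ (ψ : H) (t : ℝ), HasDerivAt (fun s => g s ψ)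
          (Complex.I • ((A t * g t - g t * A t) ψ)) t) →
      ∀ t : ℝ, g t = U t * g₀ * ContinuousLinearMap.adjoint (U t)) ∧
    ∀ t : ℝ, ‖U t * g₀ * ContinuousLinearMap.adjoint (U t)‖ = ‖g₀‖ :=
  stmt_11_general A t₀ g₀ U hU0 hUuni hUode
end

section
/- Let (Γ, d) be a countable metric space and F : [0,∞) → (0,∞) non-increasing with ‖F‖ := sup_{x∈Γ} ∑_{y∈Γ} F(d(x,y)) < ∞ and convolution constant C := sup_{x,y∈Γ} ∑_{z∈Γ} F(d(x,z))F(d(z,y))/F(d(x,y)) < ∞. Let Φ be an interaction with ‖Φ‖ := sup_{x,y} F(d(x,y))⁻¹ ∑_{X ∋ x,y} ‖Φ(X)‖ < ∞, and let X₀ ⊂ Γ be finite. Define a₁ = ∑_{Z ∈ S(X₀)} ‖Φ(Z)‖ δ_Y(Z) and recursively a_n = ∑_{Z₁ ∈ S(X₀)} ∑_{Z₂ ∈ S(Z₁)} ⋯ ∑_{Z_n ∈ S(Z_{n−1})} δ_Y(Z_n) ∏_{j=1}^n ‖Φ(Z_j)‖, where S(W) = {Z ⊂ Γ : Z ∩ W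 ≠ ∅ and Z ∩ (Γ∖W) ≠ ∅} and δ_Y(Z) = 1 if Z ∩ Y ≠ ∅, else 0, with Y ⊂ Γ finite disjoint from X₀. Then for all n ≥ 1, a_n ≤ ‖Φ‖ⁿ C^{n−1} ∑_{y∈Y} ∑_{x ∈ X₀} F(d(x,y)). -/
/-!
Work in `ℝ≥0∞`: the real `tsum` of the statement is the `toReal` of the extended sum, and is `0`
when that sum is infinite. A chain `Z₀, …, Zₙ` contributing to `aₙ` is threaded by points
`x ∈ Z₀ ∩ X₀`, `zⱼ ∈ Zⱼ ∩ Zⱼ₊₁` and `y ∈ Zₙ ∩ Y`. Summing over the sets that contain two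
consecutive points costs `‖Φ‖ F(d)`, and the convolution bound absorbs each intermediate point at
the price of a factor `C`; this is an induction on the chain length, pointwise in the first point.

The bound on `‖Φ‖` says nothing about a pair `x, z` whose sets carry infinite total weight (the
real `tsum` is then `0`). Such a pair matters only if it lies on a chain of nonzero weight, and then
the chain sum itself is infinite: of the infinitely heavy family of sets `Z` straddling `W`, either
infinitely much weight can be followed by the next set `N` of the chain, or infinitely much lies on
sets containing `N`, and then the heavy family is pushed one step down the chain. The conditions
`Z ⊄ W` exclude only the finitely many subsets of `W`.
-/

open scoped ENNReal

theorem Real.tsum_eq_toReal_tsum_ofReal {ι : Type*} {u : ι → ℝ} (hu : ∀ i, 0 ≤ u i) :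
    ∑' i, u i = (∑' i, ENNReal.ofReal (u i)).toReal := by
  rw [ENNReal.tsum_toReal_eq fun _ => ENNReal.ofReal_ne_top]
  exact tsum_congr fun i => (ENNReal.toReal_ofReal (hu i)).symm

theorem Real.tsum_le_of_tsum_ofReal_le {ι : Type*} {u : ι → ℝ} {b : ℝ} (hu : ∀ i, 0 ≤ u i)
    (hb : 0 ≤ b) (h : ∑' i, ENNReal.ofReal (u i) ≠ ∞ → ∑' i, ENNReal.ofReal (u i) ≤ .ofReal b) :
    ∑' i, u i ≤ b := by
  rw [Real.tsum_eq_toReal_tsum_ofReal hu]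
  by_cases htop : ∑' i, ENNReal.ofReal (u i) = ∞
  · simpa [htop] using hb
  · exact ENNReal.toReal_le_of_le_ofReal hb (h htop)

theorem ENNReal.tsum_ofReal_le_ofReal {ι : Type*} {u : ι → ℝ} {b : ℝ} (hu : ∀ i, 0 ≤ u i)
    (h : ∑' i, u i ≤ b) (htop : ∑' i, ENNReal.ofReal (u i) ≠ ∞) :
    ∑' i, ENNReal.ofReal (u i) ≤ .ofReal b := by
  rw [← ENNReal.ofReal_toReal htop, ← Real.tsum_eq_toReal_tsum_ofReal hu]
  exact ENNReal.ofReal_le_ofReal h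

theorem ENNReal.tsum_subtype_le_tsum_of_le {α : Type*} {s : Set α} {f g : α → ℝ≥0∞}
    (h : ∀ a ∈ s, f a ≤ g a) : ∑' a : s, f a ≤ ∑' a, g a :=
  (ENNReal.tsum_le_tsum fun a : s => h a.1 a.2).trans
    (ENNReal.tsum_comp_le_tsum_of_injective Subtype.val_injective g)

theorem ENNReal.tsum_subtype_eq_top_of_subset_union {α : Type*} (f : α → ℝ≥0∞) {s t u : Set α}
    (hst : s ⊆ t ∪ u) (hs : ∑' a : s, f a = ∞) : ∑' a : t, f a = ∞ ∨ ∑' a : u, f a = ∞ := by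
  by_contra! h
  have := (ENNReal.tsum_mono_subtype f hst).trans (ENNReal.tsum_union_le f t u)
  rw [hs, top_le_iff] at this
  exact ENNReal.add_ne_top.2 h this

theorem ENNReal.exists_mem_ne_zero_of_tsum_subtype_eq_top {α : Type*} {f : α → ℝ≥0∞}
    {s : Set α} (hs : ∑' a : s, f a = ∞) : ∃ a ∈ s, f a ≠ 0 := by
  by_contra! h
  rw [ENNReal.tsum_eq_zero.2 fun a : s => h a.1 a.2] at hs
  exact ENNReal.zero_ne_top hs

noncomputable section

namespace LiebRobinson

variable {Γ : Type*} [DecidableEq Γ]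

/-- The paper's `Z ∈ S(W)`. -/
def Straddles (W Z : Finset Γ) : Prop := (Z ∩ W).Nonempty ∧ ¬ Z ⊆ W

instance (W Z : Finset Γ) : Decidable (Straddles W Z) :=
  inferInstanceAs (Decidable (_ ∧ _))

theorem tsum_inter_not_subset_eq_top {g : Finset Γ → ℝ≥0∞} (hg : ∀ Z, g Z ≠ ∞)
    {𝒵 : Set (Finset Γ)} (h𝒵 : ∑' Z : 𝒵, g Z = ∞) (W : Finset Γ) :
    ∑' Z : ↥(𝒵 ∩ {Z | ¬ Z ⊆ W}), g Z = ∞ := by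
  have hsub : 𝒵 ⊆ (𝒵 ∩ {Z | ¬ Z ⊆ W}) ∪ (W.powerset : Set (Finset Γ)) := by
    intro Z hZ
    by_cases h : Z ⊆ W <;> simp [hZ, h]
  refine (ENNReal.tsum_subtype_eq_top_of_subset_union g hsub h𝒵).resolve_right ?_
  rw [Finset.tsum_subtype']
  exact ENNReal.sum_ne_top.2 fun Z _ => hg Z

theorem le_sum_ite_mem {W Z : Finset Γ} (h : (Z ∩ W).Nonempty) (a : ℝ≥0∞) :
    a ≤ ∑ x ∈ W, if x ∈ Z then a else 0 := by
  obtain ⟨x, hx⟩ := h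
  rw [Finset.mem_inter] at hx
  calc a = if x ∈ Z then a else 0 := (if_pos hx.1).symm
    _ ≤ _ := Finset.single_le_sum (f := fun x => if x ∈ Z then a else 0)
        (fun _ _ => zero_le) hx.2

section Chains

variable (g : Finset Γ → ℝ≥0∞) (Y : Finset Γ)

/-- The total weight of the chains `Z = Z₀, Z₁, …, Zₙ` with `Zⱼ₊₁ ∈ S(Zⱼ)` and `Zₙ ∩ Y ≠ ∅`. -/
def chainWeight : ℕ → Finset Γ → ℝ≥0∞
  | 0, Z => if (Z ∩ Y).Nonempty then g Z else 0
  | n + 1, Z => g Z * ∑' Z', if Straddles Z Z' then chainWeight n Z' else 0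

/-- The paper's `aₙ₊₁` with `X₀ := W`. -/
def chainSum (n : ℕ) (W : Finset Γ) : ℝ≥0∞ :=
  ∑' Z, if Straddles W Z then chainWeight g Y n Z else 0

def pointedChainSum (n : ℕ) (W : Finset Γ) (x : Γ) : ℝ≥0∞ :=
  ∑' Z, if Straddles W Z ∧ x ∈ Z then chainWeight g Y n Z else 0

def pairWeight (x y : Γ) : ℝ≥0∞ :=
  ∑' Z, if x ∈ Z ∧ y ∈ Z then g Z else 0

def IsChain (W : Finset Γ) (n : ℕ) (c : Fin (n + 1) → Finset Γ) : Prop :=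
  Straddles W (c 0) ∧ (∀ i : Fin n, Straddles (c i.castSucc) (c i.succ))
    ∧ (c (Fin.last n) ∩ Y).Nonempty

instance (W : Finset Γ) (n : ℕ) : DecidablePred (IsChain Y W n) :=
  fun _ => inferInstanceAs (Decidable (_ ∧ _ ∧ _))

def Continues : ℕ → Set (Finset Γ) → Prop
  | 0, 𝒵 => ∀ Z ∈ 𝒵, (Z ∩ Y).Nonempty
  | n + 1, 𝒵 => ∃ N, chainWeight g Y n N ≠ 0 ∧ ∀ Z ∈ 𝒵, (N ∩ Z).Nonempty

variable {g Y}

theorem chainWeight_succ (n : ℕ) (Z : Finset Γ) :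
    chainWeight g Y (n + 1) Z = g Z * chainSum g Y n Z := rfl

theorem pairWeight_eq_tsum_subtype (x y : Γ) :
    pairWeight g x y = ∑' Z : {Z : Finset Γ | x ∈ Z ∧ y ∈ Z}, g Z := by
  rw [tsum_subtype]
  simp only [Set.indicator_apply, Set.mem_ofPred_eq, pairWeight]

theorem isChain_cons {W Z : Finset Γ} {n : ℕ} {c : Fin (n + 1) → Finset Γ} :
    IsChain Y W (n + 1) (Fin.cons Z c) ↔ Straddles W Z ∧ IsChain Y Z n c := by
  simp only [IsChain, Fin.forall_fin_succ, Fin.cons_zero, Fin.cons_succ, ← Fin.succ_last,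
    ← Fin.succ_castSucc, Fin.castSucc_zero]
  tauto

theorem tsum_isChain_eq_chainSum :
    ∀ (n : ℕ) (W : Finset Γ),
      ∑' c : Fin (n + 1) → Finset Γ, (if IsChain Y W n c then ∏ i, g (c i) else 0)
        = chainSum g Y n W
  | 0, W => by
    rw [← (Equiv.funUnique (Fin 1) (Finset Γ)).symm.tsum_eq]
    refine tsum_congr fun Z => ?_
    simp [IsChain, chainWeight, ite_and]
  | n + 1, W => by
    rw [← (Fin.consEquiv fun _ => Finset Γ).tsum_eq, ENNReal.tsum_prod']
    refine tsum_congr fun Z => ?_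
    change ∑' c : Fin (n + 1) → Finset Γ,
      (if IsChain Y W (n + 1) (Fin.cons Z c) then ∏ i, g ((Fin.cons Z c : Fin (n + 2) → _) i)
        else 0) = _
    simp only [isChain_cons, Fin.prod_univ_succ, Fin.cons_zero, Fin.cons_succ, ite_and]
    split_ifs
    · rw [chainWeight_succ, ← tsum_isChain_eq_chainSum n Z, ← ENNReal.tsum_mul_left]
      simp only [mul_ite, mul_zero, Fin.prod_univ_succ]
    · simp

theorem chainWeight_le_chainSum {n : ℕ} {W Z : Finset Γ} (h : Straddles W Z) :
    chainWeight g Y n Z ≤ chainSum g Y n W := by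
  simpa [chainSum, h] using
    ENNReal.le_tsum (f := fun Z => if Straddles W Z then chainWeight g Y n Z else 0) Z

theorem chainSum_le_sum_pointedChainSum (n : ℕ) (W : Finset Γ) :
    chainSum g Y n W ≤ ∑ x ∈ W, pointedChainSum g Y n W x := by
  simp only [chainSum, pointedChainSum]
  rw [← Summable.tsum_finsetSum fun _ _ => ENNReal.summable]
  refine ENNReal.tsum_le_tsum fun Z => ?_
  split_ifs with h
  · simpa only [h, true_and] using le_sum_ite_mem h.1 _
  · exact zero_le

theorem continues_of_chainWeight_ne_zero {n : ℕ} {N : Finset Γ} {𝒵 : Set (Finset Γ)}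
    (hN : chainWeight g Y n N ≠ 0) (h𝒵 : ∀ Z ∈ 𝒵, N ⊆ Z) : Continues g Y n 𝒵 := by
  cases n with
  | zero =>
    have hNY : (N ∩ Y).Nonempty := by
      by_contra h
      simp [chainWeight, h] at hN
    exact fun Z hZ => hNY.mono (Finset.inter_subset_inter_right (h𝒵 Z hZ))
  | succ n =>
    rw [chainWeight_succ] at hN
    obtain ⟨N', hN'⟩ : ∃ N', (if Straddles N N' then chainWeight g Y n N' else 0) ≠ 0 := by
      by_contra! h
      exact right_ne_zero_of_mul hN (ENNReal.tsum_eq_zero.2 h)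
    have hstr : Straddles N N' := by
      by_contra h
      simp [h] at hN'
    rw [if_pos hstr] at hN'
    exact ⟨N', hN', fun Z hZ => hstr.1.mono (Finset.inter_subset_inter_left (h𝒵 Z hZ))⟩

theorem chainSum_succ_eq_top_of_heavy {k : ℕ} {W N : Finset Γ} {𝒵 : Set (Finset Γ)}
    (h𝒵 : ∑' Z : 𝒵, g Z = ∞) (hN : chainWeight g Y k N ≠ 0)
    (hstr : ∀ Z ∈ 𝒵, Straddles W Z ∧ Straddles Z N) : chainSum g Y (k + 1) W = ∞ := by
  refine top_le_iff.1 ?_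
  calc ∞ = (∑' Z : 𝒵, g Z) * chainWeight g Y k N := by rw [h𝒵, ENNReal.top_mul hN]
    _ = ∑' Z : 𝒵, g Z * chainWeight g Y k N := ENNReal.tsum_mul_right.symm
    _ ≤ chainSum g Y (k + 1) W := by
        rw [chainSum]
        refine ENNReal.tsum_subtype_le_tsum_of_le (f := fun Z => g Z * chainWeight g Y k N)
          fun Z hZ => ?_
        rw [if_pos (hstr Z hZ).1, chainWeight_succ]
        exact mul_le_mul_right (chainWeight_le_chainSum (hstr Z hZ).2) _

theorem chainSum_eq_top_of_heavy (hg : ∀ Z, g Z ≠ ∞) :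
    ∀ (n : ℕ) (W : Finset Γ) (𝒵 : Set (Finset Γ)), ∑' Z : 𝒵, g Z = ∞ →
      (∀ Z ∈ 𝒵, (Z ∩ W).Nonempty) → Continues g Y n 𝒵 → chainSum g Y n W = ∞
  | 0, W, 𝒵, h𝒵, hW, hY => by
    refine top_le_iff.1 ((tsum_inter_not_subset_eq_top hg h𝒵 W).symm.le.trans
      (ENNReal.tsum_subtype_le_tsum_of_le fun Z hZ => ?_))
    have hstr : Straddles W Z := ⟨hW Z hZ.1, hZ.2⟩
    simp [hstr, chainWeight, hY Z hZ.1]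
  | k + 1, W, 𝒵, h𝒵, hW, ⟨N, hN, hN𝒵⟩ => by
    set 𝒵' := 𝒵 ∩ {Z | ¬ Z ⊆ W}
    have hsplit : 𝒵' ⊆ (𝒵' ∩ {Z | ¬ N ⊆ Z}) ∪ (𝒵' ∩ {Z | N ⊆ Z}) := by
      intro Z hZ
      by_cases h : N ⊆ Z <;> simp [hZ, h]
    rcases ENNReal.tsum_subtype_eq_top_of_subset_union g hsplit
      (tsum_inter_not_subset_eq_top hg h𝒵 W) with hA | hB
    · -- every such `Z` can be followed by `N`
      exact chainSum_succ_eq_top_of_heavy hA hN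
        fun Z hZ => ⟨⟨hW Z hZ.1.1, hZ.1.2⟩, ⟨hN𝒵 Z hZ.1.1, hZ.2⟩⟩
    · -- the heavy family moves one step down the chain, into a set `Zs ⊇ N`
      obtain ⟨Zs, hZs, hgZs⟩ := ENNReal.exists_mem_ne_zero_of_tsum_subtype_eq_top hB
      have hNne : N.Nonempty := (hN𝒵 Zs hZs.1.1).mono Finset.inter_subset_left
      have htail : chainSum g Y k Zs = ∞ :=
        chainSum_eq_top_of_heavy hg k Zs _ hB
          (fun Z hZ => hNne.mono (Finset.subset_inter hZ.2 hZs.2))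
          (continues_of_chainWeight_ne_zero hN fun Z hZ => hZ.2)
      refine top_le_iff.1 ?_
      calc ∞ = chainWeight g Y (k + 1) Zs := by rw [chainWeight_succ, htail, ENNReal.mul_top hgZs]
        _ ≤ chainSum g Y (k + 1) W := chainWeight_le_chainSum ⟨hW Zs hZs.1.1, hZs.1.2⟩

theorem pairWeight_ne_top (hg : ∀ Z, g Z ≠ ∞) {W : Finset Γ} (hW : chainSum g Y 0 W ≠ ∞)
    {x y : Γ} (hx : x ∈ W) (hy : y ∈ Y) : pairWeight g x y ≠ ∞ := fun h =>
  hW <| chainSum_eq_top_of_heavy hg 0 W _ ((pairWeight_eq_tsum_subtype x y).symm.trans h)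
    (fun _ hZ => ⟨x, Finset.mem_inter.2 ⟨hZ.1, hx⟩⟩)
    (fun _ hZ => ⟨y, Finset.mem_inter.2 ⟨hZ.2, hy⟩⟩)

theorem chainWeight_eq_zero_of_pairWeight_eq_top (hg : ∀ Z, g Z ≠ ∞) {n : ℕ} {W N : Finset Γ}
    (hW : chainSum g Y (n + 1) W ≠ ∞) {x z : Γ} (hx : x ∈ W) (hxz : pairWeight g x z = ∞)
    (hz : z ∈ N) : chainWeight g Y n N = 0 := by
  by_contra hN
  exact hW <| chainSum_eq_top_of_heavy hg (n + 1) W _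
    ((pairWeight_eq_tsum_subtype x z).symm.trans hxz)
    (fun _ hZ => ⟨x, Finset.mem_inter.2 ⟨hZ.1, hx⟩⟩)
    ⟨N, hN, fun _ hZ => ⟨z, Finset.mem_inter.2 ⟨hz, hZ.2⟩⟩⟩

theorem pointedChainSum_eq_zero {n : ℕ} {W : Finset Γ} {z : Γ}
    (h : ∀ N, z ∈ N → chainWeight g Y n N = 0) : pointedChainSum g Y n W z = 0 :=
  ENNReal.tsum_eq_zero.2 fun N => by
    split_ifs with hN
    · exact h N hN.2
    · rfl

theorem chainSum_ne_top_of_straddles {n : ℕ} {W Z : Finset Γ} (hW : chainSum g Y (n + 1) W ≠ ∞)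
    (hWZ : Straddles W Z) (hgZ : g Z ≠ 0) : chainSum g Y n Z ≠ ∞ := fun h =>
  hW <| top_le_iff.1 <| calc
    ∞ = chainWeight g Y (n + 1) Z := by rw [chainWeight_succ, h, ENNReal.mul_top hgZ]
    _ ≤ chainSum g Y (n + 1) W := chainWeight_le_chainSum hWZ

variable {Φ C : ℝ≥0∞} {f : Γ → Γ → ℝ≥0∞}

theorem pointedChainSum_zero_le (hg : ∀ Z, g Z ≠ ∞)
    (hpair : ∀ x y, pairWeight g x y ≠ ∞ → pairWeight g x y ≤ Φ * f x y) {W : Finset Γ}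
    (hW : chainSum g Y 0 W ≠ ∞) {x : Γ} (hx : x ∈ W) :
    pointedChainSum g Y 0 W x ≤ Φ * ∑ y ∈ Y, f x y := by
  calc pointedChainSum g Y 0 W x
      ≤ ∑' Z, ∑ y ∈ Y, if x ∈ Z ∧ y ∈ Z then g Z else 0 := by
        refine ENNReal.tsum_le_tsum fun Z => ?_
        by_cases hZ : Straddles W Z ∧ x ∈ Z ∧ (Z ∩ Y).Nonempty
        · simpa [chainWeight, hZ] using le_sum_ite_mem hZ.2.2 (g Z)
        · simp_all [chainWeight]
    _ = ∑ y ∈ Y, pairWeight g x y := Summable.tsum_finsetSum fun _ _ => ENNReal.summable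
    _ ≤ ∑ y ∈ Y, Φ * f x y :=
        Finset.sum_le_sum fun y hy => hpair x y (pairWeight_ne_top hg hW hx hy)
    _ = Φ * ∑ y ∈ Y, f x y := (Finset.mul_sum ..).symm

theorem pointedChainSum_succ_le (hg : ∀ Z, g Z ≠ ∞)
    (hpair : ∀ x y, pairWeight g x y ≠ ∞ → pairWeight g x y ≤ Φ * f x y) {n : ℕ} {B : Γ → ℝ≥0∞}
    (ih : ∀ Z, chainSum g Y n Z ≠ ∞ → ∀ z ∈ Z, pointedChainSum g Y n Z z ≤ B z)
    {W : Finset Γ} (hW : chainSum g Y (n + 1) W ≠ ∞) {x : Γ} (hx : x ∈ W) :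
    pointedChainSum g Y (n + 1) W x ≤ Φ * ∑' z, f x z * B z := by
  calc pointedChainSum g Y (n + 1) W x
      ≤ ∑' Z, ∑' z, if Straddles W Z ∧ x ∈ Z ∧ z ∈ Z
          then g Z * pointedChainSum g Y n Z z else 0 := by
        refine ENNReal.tsum_le_tsum fun Z => ?_
        split_ifs with hZ
        · rw [chainWeight_succ, tsum_eq_sum (s := Z) fun z hz => by simp [hz]]
          refine (mul_le_mul_right (chainSum_le_sum_pointedChainSum n Z) _).trans_eq ?_
          rw [Finset.mul_sum]
          exact Finset.sum_congr rfl fun z hz => by simp [hZ, hz]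
        · exact zero_le
    _ = ∑' z, ∑' Z, if Straddles W Z ∧ x ∈ Z ∧ z ∈ Z
          then g Z * pointedChainSum g Y n Z z else 0 := ENNReal.tsum_comm
    _ ≤ ∑' z, Φ * f x z * B z := by
        refine ENNReal.tsum_le_tsum fun z => ?_
        by_cases hxz : pairWeight g x z = ∞
        · -- an infinite-weight pair cannot be continued by a nonzero chain
          refine le_of_eq_of_le (ENNReal.tsum_eq_zero.2 fun Z => ?_) zero_le
          rw [pointedChainSum_eq_zero fun N hN =>
            chainWeight_eq_zero_of_pairWeight_eq_top hg hW hx hxz hN]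
          simp
        calc _ ≤ ∑' Z, (if x ∈ Z ∧ z ∈ Z then g Z else 0) * B z := by
              refine ENNReal.tsum_le_tsum fun Z => ?_
              split_ifs with hZ hZ'
              · by_cases hgZ : g Z = 0
                · simp [hgZ]
                exact mul_le_mul_right
                  (ih Z (chainSum_ne_top_of_straddles hW hZ.1 hgZ) z hZ.2.2) _
              · exact absurd hZ.2 hZ'
              · exact zero_le
              · exact zero_le
          _ = pairWeight g x z * B z := ENNReal.tsum_mul_right
          _ ≤ Φ * f x z * B z := mul_le_mul_left (hpair x z hxz) _
    _ = Φ * ∑' z, f x z * B z := by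
        rw [← ENNReal.tsum_mul_left]
        exact tsum_congr fun z => mul_assoc ..

theorem pointedChainSum_le (hg : ∀ Z, g Z ≠ ∞)
    (hpair : ∀ x y, pairWeight g x y ≠ ∞ → pairWeight g x y ≤ Φ * f x y)
    (hconv : ∀ x y, ∑' z, f x z * f z y ≤ C * f x y) :
    ∀ (n : ℕ) (W : Finset Γ), chainSum g Y n W ≠ ∞ → ∀ x ∈ W,
      pointedChainSum g Y n W x ≤ Φ ^ (n + 1) * C ^ n * ∑ y ∈ Y, f x y
  | 0, _, hW, _, hx => by simpa using pointedChainSum_zero_le hg hpair hW hx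
  | n + 1, _, hW, x, hx => by
    refine (pointedChainSum_succ_le hg hpair (pointedChainSum_le hg hpair hconv n) hW hx).trans ?_
    calc Φ * ∑' z, f x z * (Φ ^ (n + 1) * C ^ n * ∑ y ∈ Y, f z y)
        = Φ ^ (n + 2) * C ^ n * ∑ y ∈ Y, ∑' z, f x z * f z y := by
          simp only [Finset.mul_sum, ← Summable.tsum_finsetSum fun _ _ => ENNReal.summable,
            ← ENNReal.tsum_mul_left]
          exact tsum_congr fun z => Finset.sum_congr rfl fun y _ => by ring
      _ ≤ Φ ^ (n + 2) * C ^ n * ∑ y ∈ Y, C * f x y :=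
          mul_le_mul_right (Finset.sum_le_sum fun y _ => hconv x y) _
      _ = Φ ^ (n + 2) * C ^ (n + 1) * ∑ y ∈ Y, f x y := by
          rw [← Finset.mul_sum]
          ring

theorem chainSum_le (hg : ∀ Z, g Z ≠ ∞)
    (hpair : ∀ x y, pairWeight g x y ≠ ∞ → pairWeight g x y ≤ Φ * f x y)
    (hconv : ∀ x y, ∑' z, f x z * f z y ≤ C * f x y) {n : ℕ} {W : Finset Γ}
    (hW : chainSum g Y n W ≠ ∞) :
    chainSum g Y n W ≤ Φ ^ (n + 1) * C ^ n * ∑ x ∈ W, ∑ y ∈ Y, f x y := by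
  rw [Finset.mul_sum]
  exact (chainSum_le_sum_pointedChainSum n W).trans
    (Finset.sum_le_sum fun x hx => pointedChainSum_le hg hpair hconv n W hW x hx)

end Chains

theorem tsum_ofReal_isChain {ΦN : Finset Γ → ℝ} (hΦN : ∀ Z, 0 ≤ ΦN Z) (Y W : Finset Γ) (n : ℕ) :
    ∑' c : Fin (n + 1) → Finset Γ,
        ENNReal.ofReal (if IsChain Y W n c then ∏ i, ΦN (c i) else 0)
      = chainSum (fun Z => .ofReal (ΦN Z)) Y n W := by
  rw [← tsum_isChain_eq_chainSum]
  refine tsum_congr fun c => ?_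
  split_ifs
  · exact ENNReal.ofReal_prod_of_nonneg fun i _ => hΦN _
  · exact ENNReal.ofReal_zero

theorem pairWeight_ofReal_le {ΦN : Finset Γ → ℝ} (hΦN : ∀ Z, 0 ≤ ΦN Z) {a b : ℝ} (ha : 0 ≤ a)
    {x y : Γ} (h : ∑' Z, (if x ∈ Z ∧ y ∈ Z then ΦN Z else 0) ≤ a * b)
    (htop : pairWeight (fun Z => .ofReal (ΦN Z)) x y ≠ ∞) :
    pairWeight (fun Z => .ofReal (ΦN Z)) x y ≤ .ofReal a * .ofReal b := by
  have hreal : pairWeight (fun Z => .ofReal (ΦN Z)) x y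
      = ∑' Z, .ofReal (if x ∈ Z ∧ y ∈ Z then ΦN Z else 0) :=
    tsum_congr fun Z => by split_ifs <;> simp
  rw [hreal] at htop ⊢
  rw [← ENNReal.ofReal_mul ha]
  exact ENNReal.tsum_ofReal_le_ofReal (fun Z => by split_ifs; exacts [hΦN Z, le_rfl]) h htop

theorem tsum_ofReal_mul_ofReal_le {X : Type*} [PseudoMetricSpace X] {F : ℝ → ℝ} {C : ℝ}
    (hF : ∀ r, 0 ≤ r → 0 ≤ F r) (hFmono : ∀ r s, 0 ≤ r → r ≤ s → F s ≤ F r) {x y : X}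
    (hFsummable : Summable fun z => F (dist x z))
    (hC : ∑' z, F (dist x z) * F (dist z y) ≤ C * F (dist x y)) (hCpos : 0 ≤ C) :
    ∑' z, ENNReal.ofReal (F (dist x z)) * .ofReal (F (dist z y))
      ≤ .ofReal C * .ofReal (F (dist x y)) := by
  have hnonneg : ∀ z, 0 ≤ F (dist x z) * F (dist z y) :=
    fun z => mul_nonneg (hF _ dist_nonneg) (hF _ dist_nonneg)
  have hsum : Summable fun z => F (dist x z) * F (dist z y) :=
    (hFsummable.mul_right (F 0)).of_nonneg_of_le hnonneg
      fun z => mul_le_mul_of_nonneg_left (hFmono 0 _ le_rfl dist_nonneg) (hF _ dist_nonneg)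
  simp_rw [← ENNReal.ofReal_mul (hF _ dist_nonneg)]
  rw [← ENNReal.ofReal_mul hCpos, ← ENNReal.ofReal_tsum_of_nonneg hnonneg hsum]
  exact ENNReal.ofReal_le_ofReal hC

end LiebRobinson

end

open LiebRobinson in
theorem stmt_12_general {Γ : Type*} [MetricSpace Γ] [DecidableEq Γ]
    (F : ℝ → ℝ) (hFpos : ∀ r : ℝ, 0 ≤ r → 0 < F r)
    (hFmono : ∀ r s : ℝ, 0 ≤ r → r ≤ s → F s ≤ F r)
    (C : ℝ)
    (hFsummable : ∀ x : Γ, Summable fun y : Γ => F (dist x y))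
    (hC : ∀ x y : Γ, ∑' z : Γ, F (dist x z) * F (dist z y) ≤ C * F (dist x y))
    (hCpos : 0 ≤ C)
    (ΦN : Finset Γ → ℝ) (hΦN : ∀ Z, 0 ≤ ΦN Z)
    (Φnorm : ℝ) (hΦnorm : 0 ≤ Φnorm)
    (hΦ : ∀ x y : Γ,
      ∑' Z : Finset Γ, (if x ∈ Z ∧ y ∈ Z then ΦN Z else 0) ≤ Φnorm * F (dist x y))
    (X₀ Y : Finset Γ) (n : ℕ) :
    (∑' c : Fin (n + 1) → Finset Γ,
        if ((c 0 ∩ X₀).Nonempty ∧ ¬ c 0 ⊆ X₀)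
            ∧ (∀ i : Fin n, (c i.succ ∩ c i.castSucc).Nonempty ∧ ¬ c i.succ ⊆ c i.castSucc)
            ∧ (c (Fin.last n) ∩ Y).Nonempty
          then ∏ i : Fin (n + 1), ΦN (c i) else 0)
      ≤ Φnorm ^ (n + 1) * C ^ n * ∑ y ∈ Y, ∑ x ∈ X₀, F (dist x y) := by
  have hF : ∀ r, 0 ≤ r → 0 ≤ F r := fun r hr => (hFpos r hr).le
  change ∑' c, (if IsChain Y X₀ n c then ∏ i, ΦN (c i) else 0) ≤ _
  refine Real.tsum_le_of_tsum_ofReal_le (fun c => ?_) ?_ fun htop => ?_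
  · split_ifs
    exacts [Finset.prod_nonneg fun i _ => hΦN _, le_rfl]
  · have : 0 ≤ ∑ y ∈ Y, ∑ x ∈ X₀, F (dist x y) :=
      Finset.sum_nonneg fun y _ => Finset.sum_nonneg fun x _ => hF _ dist_nonneg
    positivity
  rw [tsum_ofReal_isChain hΦN] at htop ⊢
  refine (chainSum_le (fun _ => ENNReal.ofReal_ne_top)
    (fun x y => pairWeight_ofReal_le hΦN hΦnorm (hΦ x y))
    (fun x y => tsum_ofReal_mul_ofReal_le hF hFmono (hFsummable x) (hC x y) hCpos) htop).trans_eq ?_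
  rw [ENNReal.ofReal_mul (by positivity), ENNReal.ofReal_mul (by positivity),
    ENNReal.ofReal_pow hΦnorm, ENNReal.ofReal_pow hCpos, Finset.sum_comm,
    ENNReal.ofReal_sum_of_nonneg fun x _ => Finset.sum_nonneg fun y _ => hF _ dist_nonneg]
  simp only [ENNReal.ofReal_sum_of_nonneg fun y _ => hF _ dist_nonneg]

/-- The combinatorial core of the Lieb-Robinson bound: the iterated sums `aₙ` over chains of
surface sets, weighted by interaction norms, satisfy
`aₙ ≤ ‖Φ‖ⁿ C^{n-1} ∑_{y∈Y} ∑_{x∈X₀} F(d(x,y))` for all `n ≥ 1`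
(stated here with `n + 1` in place of `n`). -/
theorem stmt_12 {Γ : Type*} [MetricSpace Γ] [Countable Γ] [DecidableEq Γ]
    (F : ℝ → ℝ) (hFpos : ∀ r : ℝ, 0 ≤ r → 0 < F r)
    (hFmono : ∀ r s : ℝ, 0 ≤ r → r ≤ s → F s ≤ F r)
    (normF C : ℝ)
    (hFsummable : ∀ x : Γ, Summable fun y : Γ => F (dist x y))
    (hnormF : ∀ x : Γ, ∑' y : Γ, F (dist x y) ≤ normF)
    (hC : ∀ x y : Γ, ∑' z : Γ, F (dist x z) * F (dist z y) ≤ C * F (dist x y))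
    (hCpos : 0 ≤ C)
    (ΦN : Finset Γ → ℝ) (hΦN : ∀ Z, 0 ≤ ΦN Z)
    (Φnorm : ℝ) (hΦnorm : 0 ≤ Φnorm)
    (hΦ : ∀ x y : Γ,
      ∑' Z : Finset Γ, (if x ∈ Z ∧ y ∈ Z then ΦN Z else 0) ≤ Φnorm * F (dist x y))
    (X₀ Y : Finset Γ) (hXY : Disjoint X₀ Y) (n : ℕ) :
    (∑' c : Fin (n + 1) → Finset Γ,
        if ((c 0 ∩ X₀).Nonempty ∧ ¬ c 0 ⊆ X₀)
            ∧ (∀ i : Fin n, (c i.succ ∩ c i.castSucc).Nonempty ∧ ¬ c i.succ ⊆ c i.castSucc)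
            ∧ (c (Fin.last n) ∩ Y).Nonempty
          then ∏ i : Fin (n + 1), ΦN (c i) else 0)
      ≤ Φnorm ^ (n + 1) * C ^ n * ∑ y ∈ Y, ∑ x ∈ X₀, F (dist x y) :=
  stmt_12_general F hFpos hFmono C hFsummable hC hCpos ΦN hΦN Φnorm hΦnorm hΦ X₀ Y n
end
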